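/- arXiv:2507.23264 — 4 statements merged into one kernel-verified Lean document; each statement's English description precedes it below -/
import Mathlib

section
/- Let ∇ be an affine connection on a Riemannian manifold (M,g), with dual connection ∇*. Then the curvature tensor R of ∇ vanishes if and only if the curvature tensor R* of ∇* vanishes. -/
noncomputable section

/-- Model space of a chart of an `n`-dimensional manifold. -/
abbrev E (n : ℕ) := EuclideanSpace ℝ (Fin n)

/-- A Riemannian metric in a chart: a smoothly varying bilinear form. -/
abbrev Metric (n : ℕ) := E n → (E n →L[ℝ] E n →L[ℝ] ℝ)

/-- An affine connection in a chart, represented by its Christoffel tensor: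
the covariant derivative is `(∇_X Y) p = fderiv ℝ Y p (X p) + Γ p (X p) (Y p)`. -/
abbrev Christoffel (n : ℕ) := E n → (E n →L[ℝ] E n →L[ℝ] E n)

/-- The curvature tensor `R(u,v)w` of the connection with Christoffel tensor `Γ`,
in coordinates. -/
def Curv {n : ℕ} (Γ : Christoffel n) (p u v w : E n) : E n :=
  fderiv ℝ Γ p u v w - fderiv ℝ Γ p v u w + Γ p u (Γ p v w) - Γ p v (Γ p u w)

/-- The torsion tensor `T(u,v)` of the connection with Christoffel tensor `Γ`,
in coordinates. -/
def Tor {n : ℕ} (Γ : Christoffel n) (p u v : E n) : E n :=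
  Γ p u v - Γ p v u

/-- The covariant derivative `(∇g)(u;v,w) = (∇_u g)(v,w)` in coordinates. -/
def CovDerivMetric {n : ℕ} (Γ : Christoffel n) (g : Metric n) (p u v w : E n) : ℝ :=
  fderiv ℝ g p u v w - g p (Γ p u v) w - g p v (Γ p u w)

/-- `Γs` is the Christoffel tensor of the dual connection of `Γ` w.r.t. `g`:
`X g(Y,Z) = g(∇_X Y, Z) + g(Y, ∇*_X Z)`, expressed pointwise. -/
def IsDualConnection {n : ℕ} (g : Metric n) (Γ Γs : Christoffel n) : Prop :=
  ∀ p u v w : E n, fderiv ℝ g p u v w = g p (Γ p u v) w + g p v (Γs p u w)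

/-- `g` is a Riemannian metric: smooth, symmetric and positive definite. -/
def IsRiemannian {n : ℕ} (g : Metric n) : Prop :=
  ContDiff ℝ (⊤ : ℕ∞) g ∧ (∀ p u v, g p u v = g p v u) ∧ (∀ p u, u ≠ 0 → 0 < g p u u)


set_option maxHeartbeats 1000000

instance instNACG3 (n : ℕ) : NormedAddCommGroup (E n →L[ℝ] E n →L[ℝ] E n →L[ℝ] ℝ) :=
  @ContinuousLinearMap.toNormedAddCommGroup ℝ ℝ (E n) (E n →L[ℝ] E n →L[ℝ] ℝ) _ _ _ _ _ _ (RingHom.id ℝ) _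

instance instNS3 (n : ℕ) : NormedSpace ℝ (E n →L[ℝ] E n →L[ℝ] E n →L[ℝ] ℝ) :=
  ContinuousLinearMap.toNormedSpace (E := E n) (F := E n →L[ℝ] E n →L[ℝ] ℝ) (σ₁₂ := RingHom.id ℝ)

lemma key_second {n : ℕ} (g : Metric n) (Γ Γs : Christoffel n)
    (hgd : Differentiable ℝ g) (hDg : Differentiable ℝ (fderiv ℝ g))
    (hΓd : Differentiable ℝ Γ) (hΓsd : Differentiable ℝ Γs)
    (hdual : ∀ p u v w : E n, fderiv ℝ g p u v w = g p (Γ p u v) w + g p v (Γs p u w))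
    (p x u v w : E n) :
    fderiv ℝ (fderiv ℝ g) p x u v w =
      fderiv ℝ g p x (Γ p u v) w + g p (fderiv ℝ Γ p x u v) w +
      (fderiv ℝ g p x v (Γs p u w) + g p v (fderiv ℝ Γs p x u w)) := by
  have HA := (((hDg p).hasFDerivAt.clm_apply (𝕜 := ℝ) (E := E n) (G := E n)
      (H := E n →L[ℝ] E n →L[ℝ] ℝ) (hasFDerivAt_const u p)).clm_apply
      (hasFDerivAt_const v p)).clm_apply (hasFDerivAt_const w p)
  have hΓuv := ((hΓd p).hasFDerivAt.clm_apply (hasFDerivAt_const u p)).clm_apply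
      (hasFDerivAt_const v p)
  have hΓsuw := ((hΓsd p).hasFDerivAt.clm_apply (hasFDerivAt_const u p)).clm_apply
      (hasFDerivAt_const w p)
  have HB := ((hgd p).hasFDerivAt.clm_apply hΓuv).clm_apply (hasFDerivAt_const w p)
  have HC := ((hgd p).hasFDerivAt.clm_apply (hasFDerivAt_const v p)).clm_apply hΓsuw
  have hfun : (fun q => fderiv ℝ g q u v w) = (fun q => g q (Γ q u v) w + g q v (Γs q u w)) :=
    funext fun q => hdual q u v w
  rw [hfun] at HA
  have hEq := HA.unique (HB.add HC)
  have := congrFun (congrArg DFunLike.coe hEq) x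
  simp only [ContinuousLinearMap.add_apply, ContinuousLinearMap.coe_comp',
    Function.comp_apply, ContinuousLinearMap.flip_apply, ContinuousLinearMap.zero_apply,
    map_zero, zero_add, add_zero] at this
  linarith

/-- The fundamental identity: `g(R(x,u)v, w) + g(v, R*(x,u)w) = 0`. -/
lemma key_curv {n : ℕ} (g : Metric n) (hg : IsRiemannian g)
    (Γ Γs : Christoffel n) (hΓ : ContDiff ℝ (⊤ : ℕ∞) Γ) (hΓs : ContDiff ℝ (⊤ : ℕ∞) Γs)
    (hdual : IsDualConnection g Γ Γs) (p x u v w : E n) :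
    g p (Curv Γ p x u v) w + g p v (Curv Γs p x u w) = 0 := by
  have hgd : Differentiable ℝ g := hg.1.differentiable (by simp)
  have hDg : Differentiable ℝ (fderiv ℝ g) :=
    (hg.1.fderiv_right (m := (⊤ : ℕ∞)) (by simp)).differentiable (by simp)
  have S := key_second g Γ Γs hgd hDg (hΓ.differentiable (by simp)) (hΓs.differentiable (by simp))
    hdual
  have h1 := S p x u v w
  have h2 := S p u x v w
  rw [hdual p x (Γ p u v) w, hdual p x v (Γs p u w)] at h1
  rw [hdual p u (Γ p x v) w, hdual p u v (Γs p x w)] at h2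
  have hsym : fderiv ℝ (fderiv ℝ g) p x u = fderiv ℝ (fderiv ℝ g) p u x :=
    (hg.1.contDiffAt.isSymmSndFDerivAt (by rw [minSmoothness_of_isRCLikeNormedField]; exact WithTop.coe_le_coe.mpr le_top)) x u
  have hs : fderiv ℝ (fderiv ℝ g) p x u v w = fderiv ℝ (fderiv ℝ g) p u x v w :=
    congrFun (congrArg DFunLike.coe (congrFun (congrArg DFunLike.coe hsym) v)) w
  simp only [Curv, map_sub, map_add, ContinuousLinearMap.sub_apply,
    ContinuousLinearMap.add_apply]
  linarith

/-- The curvature of `∇` vanishes iff the curvature of its dual connection `∇*`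
vanishes. -/
theorem curvature_vanishes_iff_dual_curvature_vanishes {n : ℕ}
    (g : Metric n) (hg : IsRiemannian g)
    (Γ Γs : Christoffel n) (hΓ : ContDiff ℝ (⊤ : ℕ∞) Γ) (hΓs : ContDiff ℝ (⊤ : ℕ∞) Γs)
    (hdual : IsDualConnection g Γ Γs) :
    (∀ p u v w, Curv Γ p u v w = 0) ↔ (∀ p u v w, Curv Γs p u v w = 0) := by
  
  have key := key_curv g hg Γ Γs hΓ hΓs hdual
  constructor
  · intro h p u v w
    by_contra hz
    have h0 := key p u v (Curv Γs p u v w) w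
    rw [h p u v (Curv Γs p u v w)] at h0
    simp only [map_zero, ContinuousLinearMap.zero_apply, zero_add] at h0
    exact absurd h0 (ne_of_gt (hg.2.2 p _ hz))
  · intro h p u v w
    by_contra hz
    have h0 := key p u v w (Curv Γ p u v w)
    rw [h p u v (Curv Γ p u v w)] at h0
    simp only [map_zero, add_zero] at h0
    exact absurd h0 (ne_of_gt (hg.2.2 p _ hz))
end
end

section
/- Let V be a finite-dimensional real vector space, h a positive definite symmetric bilinear form on V, and ω a nondegenerate alternating bilinear form on V. Define I = h⁻¹∘ω (i.e. ω(x, y) = h(Ix, y), via the musical isomorphisms), let k be a nondegenerate symmetric bilinear form, and define J = k⁻¹∘h and K = ω⁻¹∘k. If I² = -id, J² = id, K² = id, then I∘J∘K = -id. -/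
/-- The commuting triangle of an almost Born structure on a vector space:
if `I = h⁻¹∘ω`, `J = k⁻¹∘h`, `K = ω⁻¹∘k` (expressed via
`h(Ix,y) = ω(x,y)`, `k(Jx,y) = h(x,y)`, `ω(Kx,y) = k(x,y)`) and
`I² = -1`, `J² = 1`, `K² = 1`, then `I∘J∘K = -1`. -/
theorem born_triangle_para_quaternionic
    (V : Type*) [AddCommGroup V] [Module ℝ V] [FiniteDimensional ℝ V]
    (h k ω : V →ₗ[ℝ] V →ₗ[ℝ] ℝ)
    (hsymm : ∀ x y, h x y = h y x)
    (hpos : ∀ x, x ≠ 0 → 0 < h x x)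
    (ksymm : ∀ x y, k x y = k y x)
    (knondeg : ∀ x, (∀ y, k x y = 0) → x = 0)
    (ωalt : ∀ x, ω x x = 0)
    (ωnondeg : ∀ x, (∀ y, ω x y = 0) → x = 0)
    (I J K : Module.End ℝ V)
    (hI : ∀ x y, h (I x) y = ω x y)
    (hJ : ∀ x y, k (J x) y = h x y)
    (hK : ∀ x y, ω (K x) y = k x y)
    (hI2 : I ^ 2 = -1) (hJ2 : J ^ 2 = 1) (hK2 : K ^ 2 = 1) :
    I * J * K = -1 := by
  -- h is nondegenerate since it is positive definite
  have hnd : ∀ z : V, (∀ y, h z y = 0) → z = 0 := by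
    intro z hz
    by_contra hne
    exact (hpos z hne).ne' (hz z)
  -- J ∘ J = id
  have hJJ : ∀ x : V, J (J x) = x := by
    intro x
    have := congrFun (congrArg DFunLike.coe hJ2) x
    simpa [pow_two, Module.End.mul_apply] using this
  -- key fact: k(x,y) = h(Jx,y)
  have hk_h : ∀ x y : V, k x y = h (J x) y := by
    intro x y
    have := hJ (J x) y
    rwa [hJJ x] at this
  -- hence h(IKx, y) = h(Jx, y) for all y, so I*K = J
  have key : I * K = J := by
    ext x
    have e : ∀ y, h ((I * K) x - J x) y = 0 := by
      intro y
      have h1 : h (I (K x)) y = k x y := by rw [hI, hK]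
      have h2 : k x y = h (J x) y := hk_h x y
      simp [Module.End.mul_apply, map_sub, LinearMap.sub_apply, h1, h2]
    have := hnd _ e
    exact sub_eq_zero.mp this
  have : I * J * K = I ^ 2 * K ^ 2 := by
    rw [← key]; noncomm_ring
  rw [this, hI2, hK2, neg_one_mul]
end

section
/- Let ∇ be an affine connection on M and K the almost para-complex structure on TM defined locally by K = Hᵢ ⊗ H*ⁱ - Vᵢ ⊗ V*ⁱ in the adapted frame. Then K is integrable (its Nijenhuis tensor vanishes) if and only if the curvature tensor of ∇ vanishes. -/
open Finset

noncomputable section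

/-- Base chart of an `n`-dimensional manifold. -/
abbrev B (n : ℕ) := Fin n → ℝ

/-- The induced chart on the tangent bundle: points `(x, y)`. -/
abbrev P (n : ℕ) := (Fin n → ℝ) × (Fin n → ℝ)

/-- Christoffel symbols `Γᵏᵢⱼ` of an affine connection in the chart:
`Chr n` sends `x` to `Γ x k i j = Γᵏᵢⱼ(x)`. -/
abbrev Chr (n : ℕ) := B n → Fin n → Fin n → Fin n → ℝ

/-- The Lie bracket of vector fields on the tangent bundle chart. -/
def lieP {n : ℕ} (X Y : P n → P n) : P n → P n :=
  fun p => fderiv ℝ Y p (X p) - fderiv ℝ X p (Y p)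

/-- The horizontal frame field `Hᵢ = ∂/∂xⁱ - Γᵏᵢⱼ(x) yʲ ∂/∂yᵏ`. -/
def Hvf {n : ℕ} (Γ : Chr n) (i : Fin n) : P n → P n :=
  fun p => (Pi.single i 1, fun k => -∑ j, Γ p.1 k i j * p.2 j)

/-- The vertical frame field `Vᵢ = ∂/∂yⁱ`. -/
def Vvf {n : ℕ} (i : Fin n) : P n → P n :=
  fun _ => (0, Pi.single i 1)

/-- Components `Rˡᵢⱼₖ` of the curvature tensor of the connection `Γ`. -/
def Rcomp {n : ℕ} (Γ : Chr n) (x : B n) (l i j k : Fin n) : ℝ :=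
  fderiv ℝ (fun z => Γ z l j k) x (Pi.single i 1)
    - fderiv ℝ (fun z => Γ z l i k) x (Pi.single j 1)
    + ∑ m, (Γ x l i m * Γ x m j k - Γ x l j m * Γ x m i k)

/-- Components `Tᵏᵢⱼ = Γᵏᵢⱼ - Γᵏⱼᵢ` of the torsion tensor of `Γ`. -/
def Tcomp {n : ℕ} (Γ : Chr n) (x : B n) (k i j : Fin n) : ℝ :=
  Γ x k i j - Γ x k j i

/-- The matrix `Aᵏⱼ = Γᵏⱼₘ(x) yᵐ`, acting on a vector `ξ`. -/
def Amap {n : ℕ} (Γ : Chr n) (p : P n) (ξ : B n) : B n :=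
  fun k => ∑ j, (∑ m, Γ p.1 k j m * p.2 m) * ξ j

/-- The almost complex structure `I = Vᵢ⊗H*ⁱ - Hᵢ⊗V*ⁱ` on the tangent bundle,
as a field of endomorphisms in coordinates. -/
def Ifield {n : ℕ} (Γ : Chr n) (p : P n) (v : P n) : P n :=
  (-Amap Γ p v.1 - v.2, v.1 + Amap Γ p (Amap Γ p v.1) + Amap Γ p v.2)

/-- The almost para-complex structure `J = Vᵢ⊗H*ⁱ + Hᵢ⊗V*ⁱ`. -/
def Jfield {n : ℕ} (Γ : Chr n) (p : P n) (v : P n) : P n :=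
  (Amap Γ p v.1 + v.2, v.1 - Amap Γ p (Amap Γ p v.1) - Amap Γ p v.2)

/-- The almost para-complex structure `K = Hᵢ⊗H*ⁱ - Vᵢ⊗V*ⁱ`. -/
def Kfield {n : ℕ} (Γ : Chr n) (p : P n) (v : P n) : P n :=
  (v.1, fun k => -(2 * Amap Γ p v.1 k) - v.2 k)

/-- Nijenhuis tensor of a field of endomorphisms `A` on the tangent bundle chart:
`N_A(X,Y) = A²[X,Y] - A([AX,Y]+[X,AY]) + [AX,AY]`. -/
def nijP {n : ℕ} (A : P n → P n → P n) (X Y : P n → P n) : P n → P n :=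
  fun p =>
    A p (A p (lieP X Y p))
    - A p (lieP (fun q => A q (X q)) Y p + lieP X (fun q => A q (Y q)) p)
    + lieP (fun q => A q (X q)) (fun q => A q (Y q)) p

namespace KP
variable {n : ℕ}

lemma contDiff_chr {Γ : Chr n} (hΓ : ContDiff ℝ (⊤ : ℕ∞) Γ) (k j m : Fin n) :
    ContDiff ℝ (⊤ : ℕ∞) (fun z => Γ z k j m) :=
  contDiff_pi.mp (contDiff_pi.mp (contDiff_pi.mp hΓ k) j) m

/-- expand a CLM on `Fin n → ℝ` over the standard basis -/
lemma clm_expand (L : (Fin n → ℝ) →L[ℝ] ℝ) (v : Fin n → ℝ) :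
    L v = ∑ i, v i * L (Pi.single i 1) := by
  conv_lhs => rw [← Finset.univ_sum_single v]
  rw [map_sum]
  refine Finset.sum_congr rfl fun i _ => ?_
  have : Pi.single i (v i) = v i • (Pi.single i (1:ℝ) : Fin n → ℝ) := by
    funext j; by_cases h : j = i <;> simp [Pi.single_apply, h]
  rw [this, map_smul, smul_eq_mul]

/-- component extraction from fderiv of a product-valued map -/
lemma fderiv_comp1 {F : P n → P n} {p : P n} (hF : DifferentiableAt ℝ F p)
    (i : Fin n) (w : P n) :
    fderiv ℝ (fun q => (F q).1 i) p w = (fderiv ℝ F p w).1 i := by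
  have h : HasFDerivAt (fun q => (F q).1 i)
      (((ContinuousLinearMap.proj i).comp (ContinuousLinearMap.fst ℝ (B n) (B n))).comp
        (fderiv ℝ F p)) p :=
    (((ContinuousLinearMap.proj i).comp
      (ContinuousLinearMap.fst ℝ (B n) (B n))).hasFDerivAt.comp p hF.hasFDerivAt)
  rw [h.fderiv]; simp

lemma fderiv_comp2 {F : P n → P n} {p : P n} (hF : DifferentiableAt ℝ F p)
    (i : Fin n) (w : P n) :
    fderiv ℝ (fun q => (F q).2 i) p w = (fderiv ℝ F p w).2 i := by
  have h : HasFDerivAt (fun q => (F q).2 i)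
      (((ContinuousLinearMap.proj i).comp (ContinuousLinearMap.snd ℝ (B n) (B n))).comp
        (fderiv ℝ F p)) p :=
    (((ContinuousLinearMap.proj i).comp
      (ContinuousLinearMap.snd ℝ (B n) (B n))).hasFDerivAt.comp p hF.hasFDerivAt)
  rw [h.fderiv]; simp


variable {Γ : Chr n} {p : P n}

/-- `q ↦ Γ q.1 k j m` has a derivative. -/
lemma hasF_chr (hΓ : ContDiff ℝ (⊤ : ℕ∞) Γ) (k j m : Fin n) :
    HasFDerivAt (fun q : P n => Γ q.1 k j m)
      ((fderiv ℝ (fun z => Γ z k j m) p.1).comp (ContinuousLinearMap.fst ℝ (B n) (B n))) p :=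
  (((contDiff_chr hΓ k j m).differentiable (by simp)).differentiableAt.hasFDerivAt).comp p
    hasFDerivAt_fst

/-- `q ↦ q.2 m` has a derivative. -/
lemma hasF_y (m : Fin n) :
    HasFDerivAt (fun q : P n => q.2 m)
      ((ContinuousLinearMap.proj m).comp (ContinuousLinearMap.snd ℝ (B n) (B n))) p :=
  ((ContinuousLinearMap.proj m).comp (ContinuousLinearMap.snd ℝ (B n) (B n))).hasFDerivAt

/-- derivative of `G k j = ∑ m, Γ q.1 k j m * q.2 m`. -/
lemma hasF_G (hΓ : ContDiff ℝ (⊤ : ℕ∞) Γ) (k j : Fin n) :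
    HasFDerivAt (fun q : P n => ∑ m, Γ q.1 k j m * q.2 m)
      (∑ m, (Γ p.1 k j m •
          ((ContinuousLinearMap.proj m).comp (ContinuousLinearMap.snd ℝ (B n) (B n)))
        + p.2 m •
          ((fderiv ℝ (fun z => Γ z k j m) p.1).comp
            (ContinuousLinearMap.fst ℝ (B n) (B n))))) p :=
  HasFDerivAt.fun_sum fun m _ => (hasF_chr hΓ k j m).fun_mul (hasF_y m)

lemma dG_eval (hΓ : ContDiff ℝ (⊤ : ℕ∞) Γ) (k j : Fin n) (w : P n) :
    fderiv ℝ (fun q : P n => ∑ m, Γ q.1 k j m * q.2 m) p w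
      = ∑ m, (Γ p.1 k j m * w.2 m
          + fderiv ℝ (fun z => Γ z k j m) p.1 w.1 * p.2 m) := by
  rw [(hasF_G hΓ k j).fderiv]
  simp [ContinuousLinearMap.sum_apply, mul_comm]

lemma diffAt_G (hΓ : ContDiff ℝ (⊤ : ℕ∞) Γ) (k j : Fin n) :
    DifferentiableAt ℝ (fun q : P n => ∑ m, Γ q.1 k j m * q.2 m) p :=
  (hasF_G hΓ k j).differentiableAt


variable {X : P n → P n}

lemma diffAt_X1 (hX : ContDiff ℝ (⊤ : ℕ∞) X) (j : Fin n) :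
    DifferentiableAt ℝ (fun q => (X q).1 j) p :=
  differentiableAt_pi.mp ((hX.differentiable (by simp)) p).fst j

lemma diffAt_X2 (hX : ContDiff ℝ (⊤ : ℕ∞) X) (k : Fin n) :
    DifferentiableAt ℝ (fun q => (X q).2 k) p :=
  differentiableAt_pi.mp ((hX.differentiable (by simp)) p).snd k

lemma hasF_KX2 (hΓ : ContDiff ℝ (⊤ : ℕ∞) Γ) (hX : ContDiff ℝ (⊤ : ℕ∞) X) (k : Fin n) :
    HasFDerivAt (fun q => (Kfield Γ q (X q)).2 k)
      (-((2:ℝ) • (∑ j, ((∑ m, Γ p.1 k j m * p.2 m) • fderiv ℝ (fun q => (X q).1 j) p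
          + (X p).1 j • (∑ m, (Γ p.1 k j m •
              ((ContinuousLinearMap.proj m).comp (ContinuousLinearMap.snd ℝ (B n) (B n)))
            + p.2 m •
              ((fderiv ℝ (fun z => Γ z k j m) p.1).comp
                (ContinuousLinearMap.fst ℝ (B n) (B n))))))))
        - fderiv ℝ (fun q => (X q).2 k) p) p := by
  have h : HasFDerivAt
      (fun q : P n => -(2 * ∑ j, (∑ m, Γ q.1 k j m * q.2 m) * (X q).1 j) - (X q).2 k)
      _ p :=
    ((HasFDerivAt.fun_sum (fun j _ =>
        (hasF_G hΓ k j).fun_mul ((diffAt_X1 hX j).hasFDerivAt))).const_mul 2).fun_neg.fun_sub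
      ((diffAt_X2 hX k).hasFDerivAt)
  exact h

lemma diffAt_KX (hΓ : ContDiff ℝ (⊤ : ℕ∞) Γ) (hX : ContDiff ℝ (⊤ : ℕ∞) X) :
    DifferentiableAt ℝ (fun q => Kfield Γ q (X q)) p := by
  apply DifferentiableAt.prodMk
  · exact ((hX.differentiable (by simp)) p).fst
  · apply differentiableAt_pi.mpr
    intro k
    exact (((DifferentiableAt.fun_sum (fun j _ =>
        (diffAt_G hΓ k j).fun_mul (diffAt_X1 hX j))).const_mul 2).fun_neg).fun_sub (diffAt_X2 hX k)

lemma dKX2_eval (hΓ : ContDiff ℝ (⊤ : ℕ∞) Γ) (hX : ContDiff ℝ (⊤ : ℕ∞) X) (k : Fin n) (w : P n) :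
    fderiv ℝ (fun q => (Kfield Γ q (X q)).2 k) p w
      = -(2 * ∑ j, ((∑ m, Γ p.1 k j m * p.2 m) * fderiv ℝ (fun q => (X q).1 j) p w
          + (X p).1 j * (∑ m, (Γ p.1 k j m * w.2 m
              + fderiv ℝ (fun z => Γ z k j m) p.1 w.1 * p.2 m))))
        - fderiv ℝ (fun q => (X q).2 k) p w := by
  rw [(hasF_KX2 (p := p) hΓ hX k).fderiv]
  simp [ContinuousLinearMap.sum_apply, mul_comm, Finset.mul_sum]


lemma cKX1 (hΓ : ContDiff ℝ (⊤ : ℕ∞) Γ) (hX : ContDiff ℝ (⊤ : ℕ∞) X) (j : Fin n) (w : P n) :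
    (fderiv ℝ (fun q => Kfield Γ q (X q)) p w).1 j = fderiv ℝ (fun q => (X q).1 j) p w := by
  rw [← fderiv_comp1 (diffAt_KX hΓ hX) j w]
  rfl

lemma cKX2 (hΓ : ContDiff ℝ (⊤ : ℕ∞) Γ) (hX : ContDiff ℝ (⊤ : ℕ∞) X) (k : Fin n) (w : P n) :
    (fderiv ℝ (fun q => Kfield Γ q (X q)) p w).2 k
      = -(2 * ∑ j, ((∑ m, Γ p.1 k j m * p.2 m) * fderiv ℝ (fun q => (X q).1 j) p w
          + (X p).1 j * (∑ m, (Γ p.1 k j m * w.2 m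
              + fderiv ℝ (fun z => Γ z k j m) p.1 w.1 * p.2 m))))
        - fderiv ℝ (fun q => (X q).2 k) p w := by
  rw [← fderiv_comp2 (diffAt_KX hΓ hX) k w]
  exact dKX2_eval hΓ hX k w

lemma cX1 (hX : ContDiff ℝ (⊤ : ℕ∞) X) (j : Fin n) (w : P n) :
    (fderiv ℝ X p w).1 j = fderiv ℝ (fun q => (X q).1 j) p w :=
  (fderiv_comp1 ((hX.differentiable (by simp)) p) j w).symm

lemma cX2 (hX : ContDiff ℝ (⊤ : ℕ∞) X) (k : Fin n) (w : P n) :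
    (fderiv ℝ X p w).2 k = fderiv ℝ (fun q => (X q).2 k) p w :=
  (fderiv_comp2 ((hX.differentiable (by simp)) p) k w).symm

lemma K1 (v : P n) (i : Fin n) : (Kfield Γ p v).1 i = v.1 i := rfl
lemma Kfst (v : P n) : (Kfield Γ p v).1 = v.1 := rfl
lemma K2 (v : P n) (k : Fin n) :
    (Kfield Γ p v).2 k = -(2 * ∑ j, (∑ m, Γ p.1 k j m * p.2 m) * v.1 j) - v.2 k := rfl

lemma sum3_cycle (f : Fin n → Fin n → Fin n → ℝ) :
    ∑ a, ∑ b, ∑ c, f a b c = ∑ b, ∑ c, ∑ a, f a b c := by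
  rw [Finset.sum_comm]
  exact Finset.sum_congr rfl fun b _ => Finset.sum_comm

lemma sum3_cycle' (f : Fin n → Fin n → Fin n → ℝ) :
    ∑ a, ∑ b, ∑ c, f a b c = ∑ c, ∑ a, ∑ b, f a b c := by
  calc ∑ a, ∑ b, ∑ c, f a b c = ∑ a, ∑ c, ∑ b, f a b c :=
        Finset.sum_congr rfl fun a _ => Finset.sum_comm
    _ = ∑ c, ∑ a, ∑ b, f a b c := Finset.sum_comm

lemma sum4_perm (f : Fin n → Fin n → Fin n → Fin n → ℝ) :
    ∑ a, ∑ b, ∑ c, ∑ d, f a b c d = ∑ c, ∑ a, ∑ d, ∑ b, f a b c d := by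
  calc ∑ a, ∑ b, ∑ c, ∑ d, f a b c d
      = ∑ a, ∑ c, ∑ b, ∑ d, f a b c d :=
        Finset.sum_congr rfl fun a _ => Finset.sum_comm
    _ = ∑ c, ∑ a, ∑ b, ∑ d, f a b c d := Finset.sum_comm
    _ = ∑ c, ∑ a, ∑ d, ∑ b, f a b c d :=
        Finset.sum_congr rfl fun c _ => Finset.sum_congr rfl fun a _ => Finset.sum_comm

set_option maxHeartbeats 2000000 in
lemma nij2 {Y : P n → P n} (hΓ : ContDiff ℝ (⊤ : ℕ∞) Γ) (hX : ContDiff ℝ (⊤ : ℕ∞) X) (hY : ContDiff ℝ (⊤ : ℕ∞) Y) (k : Fin n) :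
    (nijP (Kfield Γ) X Y p).2 k
      = -4 * ∑ i, ∑ j, ∑ m, (X p).1 i * (Y p).1 j * Rcomp Γ p.1 k i j m * p.2 m := by
  have ea : ∀ k' j' m', fderiv ℝ (fun z => Γ z k' j' m') p.1 (X p).1
      = ∑ i, (X p).1 i * fderiv ℝ (fun z => Γ z k' j' m') p.1 (Pi.single i 1) :=
    fun k' j' m' => clm_expand _ _
  have eb : ∀ k' j' m', fderiv ℝ (fun z => Γ z k' j' m') p.1 (Y p).1
      = ∑ i, (Y p).1 i * fderiv ℝ (fun z => Γ z k' j' m') p.1 (Pi.single i 1) :=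
    fun k' j' m' => clm_expand _ _
  simp only [nijP, lieP, Prod.snd_sub, Prod.snd_add, Prod.fst_sub, Prod.fst_add,
    Pi.sub_apply, Pi.add_apply, K2, K1,
    cKX1 hΓ hX, cKX2 hΓ hX, cKX1 hΓ hY, cKX2 hΓ hY,
    cX1 hX, cX2 hX, cX1 hY, cX2 hY, Kfst, K2, Rcomp]
  simp only [ea, eb]
  simp only [mul_sub, mul_add, sub_mul, add_mul, neg_mul, mul_neg, neg_neg, neg_sub,
    Finset.sum_add_distrib, Finset.sum_sub_distrib, Finset.mul_sum, Finset.sum_mul,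
    Finset.sum_neg_distrib]
  ring_nf
  have h3 : (∑ x : Fin n, ∑ x_1 : Fin n, ∑ x_2 : Fin n,
        (X p).1 x * (Y p).1 x_2 * (fderiv ℝ (fun z => Γ z k x x_1) p.1) (Pi.single x_2 1) * p.2 x_1 * 2)
      = ∑ x : Fin n, ∑ x_1 : Fin n, ∑ x_2 : Fin n,
        (X p).1 x * (Y p).1 x_1 * (fderiv ℝ (fun z => Γ z k x x_2) p.1) (Pi.single x_1 1) * p.2 x_2 * 2 :=
    Finset.sum_congr rfl fun x _ => Finset.sum_comm
  have h4 : (∑ x : Fin n, ∑ x_1 : Fin n, ∑ x_2 : Fin n,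
        (Y p).1 x * (X p).1 x_2 * (fderiv ℝ (fun z => Γ z k x x_1) p.1) (Pi.single x_2 1) * p.2 x_1 * 2)
      = ∑ x : Fin n, ∑ x_1 : Fin n, ∑ x_2 : Fin n,
        (X p).1 x * (Y p).1 x_1 * (fderiv ℝ (fun z => Γ z k x_1 x_2) p.1) (Pi.single x 1) * p.2 x_2 * 2 := by
    rw [sum3_cycle']
    exact Finset.sum_congr rfl fun _ _ => Finset.sum_congr rfl fun _ _ =>
      Finset.sum_congr rfl fun _ _ => by ring
  have h5 : (∑ x : Fin n, ∑ x_1 : Fin n, ∑ x_2 : Fin n, ∑ x_3 : Fin n,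
        (Y p).1 x * Γ p.1 k x x_1 * Γ p.1 x_1 x_2 x_3 * p.2 x_3 * (X p).1 x_2 * 4)
      = ∑ x : Fin n, ∑ x_1 : Fin n, ∑ x_2 : Fin n, ∑ x_3 : Fin n,
        (X p).1 x * (Y p).1 x_1 * p.2 x_2 * Γ p.1 k x_1 x_3 * Γ p.1 x_3 x x_2 * 4 := by
    rw [sum4_perm]
    exact Finset.sum_congr rfl fun _ _ => Finset.sum_congr rfl fun _ _ =>
      Finset.sum_congr rfl fun _ _ => Finset.sum_congr rfl fun _ _ => by ring
  have h6 : (∑ x : Fin n, ∑ x_1 : Fin n, ∑ x_2 : Fin n, ∑ x_3 : Fin n,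
        (X p).1 x * Γ p.1 k x x_1 * Γ p.1 x_1 x_2 x_3 * p.2 x_3 * (Y p).1 x_2 * 4)
      = ∑ x : Fin n, ∑ x_1 : Fin n, ∑ x_2 : Fin n, ∑ x_3 : Fin n,
        (X p).1 x * (Y p).1 x_1 * p.2 x_2 * Γ p.1 k x x_3 * Γ p.1 x_3 x_1 x_2 * 4 := by
    refine Finset.sum_congr rfl fun a _ => ?_
    rw [sum3_cycle]
    exact Finset.sum_congr rfl fun _ _ => Finset.sum_congr rfl fun _ _ =>
      Finset.sum_congr rfl fun _ _ => by ring
  rw [h3, h4, h5, h6]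
  simp only [Finset.sum_mul]
  ring_nf

lemma nij1 {Y : P n → P n} (hΓ : ContDiff ℝ (⊤ : ℕ∞) Γ) (hX : ContDiff ℝ (⊤ : ℕ∞) X) (hY : ContDiff ℝ (⊤ : ℕ∞) Y) :
    (nijP (Kfield Γ) X Y p).1 = 0 := by
  funext i
  simp only [nijP, lieP, Prod.fst_sub, Prod.fst_add, Pi.sub_apply, Pi.add_apply, K1,
    cKX1 hΓ hX, cKX1 hΓ hY, cX1 hX, cX1 hY, Pi.zero_apply]
  ring

lemma contDiff_Hvf (hΓ : ContDiff ℝ (⊤ : ℕ∞) Γ) (i : Fin n) : ContDiff ℝ (⊤ : ℕ∞) (Hvf Γ i) := by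
  unfold Hvf
  apply ContDiff.prodMk
  · exact contDiff_const
  · apply contDiff_pi.mpr; intro k
    apply ContDiff.neg
    apply ContDiff.sum; intro j _
    exact ((contDiff_chr hΓ k i j).comp contDiff_fst).mul
      (((ContinuousLinearMap.proj j).comp (ContinuousLinearMap.snd ℝ (B n) (B n))).contDiff)

end KP

/-- The almost para-complex structure `K = Hᵢ⊗H*ⁱ - Vᵢ⊗V*ⁱ` on the tangent
bundle is integrable iff the curvature of `∇` vanishes. -/


theorem K_integrable_iff_curvature_flat {n : ℕ}
    (Γ : Chr n) (hΓ : ContDiff ℝ (⊤ : ℕ∞) Γ) :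
    (∀ X Y : P n → P n, ContDiff ℝ (⊤ : ℕ∞) X → ContDiff ℝ (⊤ : ℕ∞) Y →
        ∀ p, nijP (Kfield Γ) X Y p = 0) ↔
      (∀ x l i j k, Rcomp Γ x l i j k = 0) := by
  constructor
  · intro h x l i j k
    have h0 := h (Hvf Γ i) (Hvf Γ j) (KP.contDiff_Hvf hΓ i) (KP.contDiff_Hvf hΓ j) (x, Pi.single k 1)
    have h2 : (nijP (Kfield Γ) (Hvf Γ i) (Hvf Γ j) (x, Pi.single k 1)).2 l = 0 := by
      rw [h0]; rfl
    rw [KP.nij2 hΓ (KP.contDiff_Hvf hΓ i) (KP.contDiff_Hvf hΓ j) l] at h2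
    simp [Hvf, Pi.single_apply] at h2
    convert h2 using 2
  · intro hR X Y hX hY p
    refine Prod.ext (KP.nij1 hΓ hX hY) (funext fun k => ?_)
    rw [KP.nij2 hΓ hX hY k]
    simp [hR]
end
end

section
/- Let (M, ∇, g) with ∇ an affine connection and g a Riemannian metric, and let ω be the 2-form on TM defined locally by ω = (gᵢⱼ∘π)(H*ⁱ ⊗ V*ʲ - V*ʲ ⊗ H*ⁱ) in the adapted coframe determined by ∇. Then dω = 0 if and only if the dual connection ∇* of ∇ with respect to g is torsion-free. -/
open Finset

noncomputable section

/-- A metric in the base chart: `gMet x i j = gᵢⱼ(x)`. -/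
abbrev Met (n : ℕ) := B n → Fin n → Fin n → ℝ

/-- The coframe component `V*ʲ(u) = uʸⱼ + Γʲₖₘ(x) yᵐ uˣₖ` (`H*ⁱ(u) = uˣᵢ`). -/
def Vst {n : ℕ} (Γ : Chr n) (p : P n) (u : P n) (j : Fin n) : ℝ :=
  u.2 j + Amap Γ p u.1 j

/-- The 2-form `ω = gᵢⱼ (H*ⁱ⊗V*ʲ - V*ʲ⊗H*ⁱ)` on the tangent bundle. -/
def ωform {n : ℕ} (g : Met n) (Γ : Chr n) (p : P n) (u v : P n) : ℝ :=
  ∑ i, ∑ j, g p.1 i j * (u.1 i * Vst Γ p v j - Vst Γ p u j * v.1 i)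

/-- The exterior derivative of a 2-form evaluated on vector fields, via the
invariant formula. -/
def dform {n : ℕ} (ω : P n → P n → P n → ℝ) (X Y Z : P n → P n) (p : P n) : ℝ :=
  fderiv ℝ (fun q => ω q (Y q) (Z q)) p (X p)
  + fderiv ℝ (fun q => ω q (Z q) (X q)) p (Y p)
  + fderiv ℝ (fun q => ω q (X q) (Y q)) p (Z p)
  - ω p (lieP X Y p) (Z p) - ω p (lieP Y Z p) (X p) - ω p (lieP Z X p) (Y p)


/-! ### Auxiliary machinery -/

section Aux

open ContinuousLinearMap

variable {n : ℕ}

/-- Combining four double sums. -/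
theorem sum2_add4 {n : ℕ} (F G H K : Fin n → Fin n → ℝ) :
    (∑ i, ∑ j, F i j) + (∑ i, ∑ j, G i j) + (∑ i, ∑ j, H i j) + (∑ i, ∑ j, K i j)
      = ∑ i, ∑ j, (F i j + G i j + H i j + K i j) := by
  simp [Finset.sum_add_distrib]

/-- Applied form of `fderiv_sum`. -/
theorem fdapp_sum {E : Type*} [NormedAddCommGroup E] [NormedSpace ℝ E] {ι : Type*}
    {s : Finset ι} {f : ι → E → ℝ} {x : E}
    (h : ∀ i ∈ s, DifferentiableAt ℝ (f i) x) (w : E) :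
    fderiv ℝ (fun y => ∑ i ∈ s, f i y) x w = ∑ i ∈ s, fderiv ℝ (f i) x w := by
  rw [fderiv_fun_sum h]; simp

theorem fdapp_mul {E : Type*} [NormedAddCommGroup E] [NormedSpace ℝ E]
    {f g : E → ℝ} {x : E} (hf : DifferentiableAt ℝ f x) (hg : DifferentiableAt ℝ g x) (w : E) :
    fderiv ℝ (fun y => f y * g y) x w = f x * fderiv ℝ g x w + g x * fderiv ℝ f x w := by
  rw [fderiv_fun_mul hf hg]; simp

theorem fdapp_add {E : Type*} [NormedAddCommGroup E] [NormedSpace ℝ E]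
    {f g : E → ℝ} {x : E} (hf : DifferentiableAt ℝ f x) (hg : DifferentiableAt ℝ g x) (w : E) :
    fderiv ℝ (fun y => f y + g y) x w = fderiv ℝ f x w + fderiv ℝ g x w := by
  rw [fderiv_fun_add hf hg]; simp

theorem fdapp_sub {E : Type*} [NormedAddCommGroup E] [NormedSpace ℝ E]
    {f g : E → ℝ} {x : E} (hf : DifferentiableAt ℝ f x) (hg : DifferentiableAt ℝ g x) (w : E) :
    fderiv ℝ (fun y => f y - g y) x w = fderiv ℝ f x w - fderiv ℝ g x w := by
  rw [fderiv_fun_sub hf hg]; simp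

/-- A continuous linear map on `B n` is determined by its values on the basis. -/
theorem clm_apply_basis (L : B n →L[ℝ] ℝ) (ξ : B n) :
    L ξ = ∑ l, ξ l * L (Pi.single l 1) := by
  have h : ξ = ∑ l, ξ l • (Pi.single l 1 : B n) := by
    funext j; simp [Pi.single_apply]
  nth_rewrite 1 [h]
  rw [map_sum]
  simp [mul_comm]

/-- Linearity of `fderiv` application, for decomposition over the basis. -/
theorem fderiv_apply_basis (f : B n → ℝ) (x : B n) (ξ : B n) :
    fderiv ℝ f x ξ = ∑ l, ξ l * fderiv ℝ f x (Pi.single l 1) :=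
  clm_apply_basis _ ξ

/-! #### Smoothness of the building blocks -/

theorem cd_g3 {g : Met n} (hg : ContDiff ℝ (⊤ : ℕ∞) g) (i j : Fin n) :
    ContDiff ℝ (⊤ : ℕ∞) (fun x => g x i j) := (contDiff_pi.mp ((contDiff_pi.mp hg) i)) j

theorem cd_Γ4 {Γ : Chr n} (hΓ : ContDiff ℝ (⊤ : ℕ∞) Γ) (k i j : Fin n) :
    ContDiff ℝ (⊤ : ℕ∞) (fun x => Γ x k i j) :=
  (contDiff_pi.mp ((contDiff_pi.mp ((contDiff_pi.mp hΓ) k)) i)) j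

theorem cd_gP {g : Met n} (hg : ContDiff ℝ (⊤ : ℕ∞) g) (i j : Fin n) :
    ContDiff ℝ (⊤ : ℕ∞) (fun q : P n => g q.1 i j) := (cd_g3 hg i j).comp contDiff_fst

theorem cd_ΓP {Γ : Chr n} (hΓ : ContDiff ℝ (⊤ : ℕ∞) Γ) (k i j : Fin n) :
    ContDiff ℝ (⊤ : ℕ∞) (fun q : P n => Γ q.1 k i j) := (cd_Γ4 hΓ k i j).comp contDiff_fst

theorem cd_snd2 (m : Fin n) : ContDiff ℝ (⊤ : ℕ∞) (fun q : P n => q.2 m) :=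
  (contDiff_pi.mp contDiff_snd) m

theorem cd_Y1 {Y : P n → P n} (hY : ContDiff ℝ (⊤ : ℕ∞) Y) (i : Fin n) :
    ContDiff ℝ (⊤ : ℕ∞) (fun q : P n => (Y q).1 i) :=
  (contDiff_pi.mp (contDiff_fst.comp hY)) i

theorem cd_Y2 {Y : P n → P n} (hY : ContDiff ℝ (⊤ : ℕ∞) Y) (i : Fin n) :
    ContDiff ℝ (⊤ : ℕ∞) (fun q : P n => (Y q).2 i) :=
  (contDiff_pi.mp (contDiff_snd.comp hY)) i

theorem cd_cmat {Γ : Chr n} (hΓ : ContDiff ℝ (⊤ : ℕ∞) Γ) (j k : Fin n) :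
    ContDiff ℝ (⊤ : ℕ∞) (fun q : P n => ∑ m, Γ q.1 j k m * q.2 m) :=
  ContDiff.sum fun m _ => (cd_ΓP hΓ j k m).mul (cd_snd2 m)

theorem cd_VstF {Γ : Chr n} (hΓ : ContDiff ℝ (⊤ : ℕ∞) Γ) {Z : P n → P n} (hZ : ContDiff ℝ (⊤ : ℕ∞) Z)
    (j : Fin n) : ContDiff ℝ (⊤ : ℕ∞) (fun q : P n => Vst Γ q (Z q) j) := by
  simp only [Vst, Amap]
  exact (cd_Y2 hZ j).add (ContDiff.sum fun k _ => (cd_cmat hΓ j k).mul (cd_Y1 hZ k))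

theorem cd_bracket {g : Met n} {Γ : Chr n} (hg : ContDiff ℝ (⊤ : ℕ∞) g) (hΓ : ContDiff ℝ (⊤ : ℕ∞) Γ)
    {Y Z : P n → P n} (hY : ContDiff ℝ (⊤ : ℕ∞) Y) (hZ : ContDiff ℝ (⊤ : ℕ∞) Z) (i j : Fin n) :
    ContDiff ℝ (⊤ : ℕ∞) (fun q : P n => g q.1 i j *
      ((Y q).1 i * Vst Γ q (Z q) j - Vst Γ q (Y q) j * (Z q).1 i)) :=
  (cd_gP hg i j).mul (((cd_Y1 hY i).mul (cd_VstF hΓ hZ j)).sub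
    ((cd_VstF hΓ hY j).mul (cd_Y1 hZ i)))

/-! #### Basic applied derivatives -/

theorem fda_gP {g : Met n} (hg : ContDiff ℝ (⊤ : ℕ∞) g) (i j : Fin n) (p w : P n) :
    fderiv ℝ (fun q : P n => g q.1 i j) p w = fderiv ℝ (fun x => g x i j) p.1 w.1 := by
  have h : HasFDerivAt (fun q : P n => g q.1 i j)
      ((fderiv ℝ (fun x => g x i j) p.1).comp (ContinuousLinearMap.fst ℝ (B n) (B n))) p :=
    ((cd_g3 hg i j).differentiable (by simp) p.1).hasFDerivAt.comp p hasFDerivAt_fst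
  rw [h.fderiv]; simp

theorem fda_ΓP {Γ : Chr n} (hΓ : ContDiff ℝ (⊤ : ℕ∞) Γ) (k i j : Fin n) (p w : P n) :
    fderiv ℝ (fun q : P n => Γ q.1 k i j) p w = fderiv ℝ (fun x => Γ x k i j) p.1 w.1 := by
  have h : HasFDerivAt (fun q : P n => Γ q.1 k i j)
      ((fderiv ℝ (fun x => Γ x k i j) p.1).comp (ContinuousLinearMap.fst ℝ (B n) (B n))) p :=
    ((cd_Γ4 hΓ k i j).differentiable (by simp) p.1).hasFDerivAt.comp p hasFDerivAt_fst
  rw [h.fderiv]; simp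

theorem fda_snd2 (m : Fin n) (p w : P n) :
    fderiv ℝ (fun q : P n => q.2 m) p w = w.2 m := by
  have h : HasFDerivAt (fun q : P n => q.2 m)
      ((ContinuousLinearMap.proj (R := ℝ) (φ := fun _ : Fin n => ℝ) m).comp
        (ContinuousLinearMap.snd ℝ (B n) (B n))) p :=
    ((ContinuousLinearMap.proj (R := ℝ) (φ := fun _ : Fin n => ℝ) m).comp
        (ContinuousLinearMap.snd ℝ (B n) (B n))).hasFDerivAt
  rw [h.fderiv]; simp

theorem fda_Y1 {Y : P n → P n} (hY : ContDiff ℝ (⊤ : ℕ∞) Y) (i : Fin n) (p w : P n) :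
    fderiv ℝ (fun q => (Y q).1 i) p w = (fderiv ℝ Y p w).1 i := by
  have h : HasFDerivAt (fun q => (Y q).1 i)
      (((ContinuousLinearMap.proj (R := ℝ) (φ := fun _ : Fin n => ℝ) i).comp
        (ContinuousLinearMap.fst ℝ (B n) (B n))).comp (fderiv ℝ Y p)) p :=
    ((ContinuousLinearMap.proj (R := ℝ) (φ := fun _ : Fin n => ℝ) i).comp
      (ContinuousLinearMap.fst ℝ (B n) (B n))).hasFDerivAt.comp p
      (hY.differentiable (by simp) p).hasFDerivAt
  rw [h.fderiv]; simp

theorem fda_Y2 {Y : P n → P n} (hY : ContDiff ℝ (⊤ : ℕ∞) Y) (i : Fin n) (p w : P n) :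
    fderiv ℝ (fun q => (Y q).2 i) p w = (fderiv ℝ Y p w).2 i := by
  have h : HasFDerivAt (fun q => (Y q).2 i)
      (((ContinuousLinearMap.proj (R := ℝ) (φ := fun _ : Fin n => ℝ) i).comp
        (ContinuousLinearMap.snd ℝ (B n) (B n))).comp (fderiv ℝ Y p)) p :=
    ((ContinuousLinearMap.proj (R := ℝ) (φ := fun _ : Fin n => ℝ) i).comp
      (ContinuousLinearMap.snd ℝ (B n) (B n))).hasFDerivAt.comp p
      (hY.differentiable (by simp) p).hasFDerivAt
  rw [h.fderiv]; simp

/-! #### The main auxiliary forms -/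

/-- The part of the derivative of the coframe coefficients in the direction `w`. -/
def Qform (Γ : Chr n) (p w : P n) (ξ : B n) (j : Fin n) : ℝ :=
  ∑ k, (∑ m, (fderiv ℝ (fun z => Γ z j k m) p.1 w.1 * p.2 m + Γ p.1 j k m * w.2 m)) * ξ k

/-- The "tensorial part" of the derivative of `ω` in the direction `w`. -/
def Eform (g : Met n) (Γ : Chr n) (p w u v : P n) : ℝ :=
  (∑ i, ∑ j, fderiv ℝ (fun z => g z i j) p.1 w.1 *
      (u.1 i * Vst Γ p v j - Vst Γ p u j * v.1 i))
  + ∑ i, ∑ j, g p.1 i j * (u.1 i * Qform Γ p w v.1 j - Qform Γ p w u.1 j * v.1 i)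

/-- The value of `dω` as a tensor. -/
def delF (g : Met n) (Γ : Chr n) (p x y z : P n) : ℝ :=
  Eform g Γ p x y z + Eform g Γ p y z x + Eform g Γ p z x y

theorem fda_cmat {Γ : Chr n} (hΓ : ContDiff ℝ (⊤ : ℕ∞) Γ) (j k : Fin n) (p w : P n) :
    fderiv ℝ (fun q : P n => ∑ m, Γ q.1 j k m * q.2 m) p w
      = ∑ m, (fderiv ℝ (fun z => Γ z j k m) p.1 w.1 * p.2 m + Γ p.1 j k m * w.2 m) := by
  rw [fdapp_sum (fun m _ =>
    (((cd_ΓP hΓ j k m).mul (cd_snd2 m)).differentiable (by simp)).differentiableAt) w]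
  refine Finset.sum_congr rfl fun m _ => ?_
  rw [fdapp_mul (((cd_ΓP hΓ j k m).differentiable (by simp)).differentiableAt)
    (((cd_snd2 m).differentiable (by simp)).differentiableAt) w, fda_ΓP hΓ j k m p w,
    fda_snd2 m p w]
  ring

theorem fda_Vst {Γ : Chr n} (hΓ : ContDiff ℝ (⊤ : ℕ∞) Γ) {Z : P n → P n} (hZ : ContDiff ℝ (⊤ : ℕ∞) Z)
    (j : Fin n) (p w : P n) :
    fderiv ℝ (fun q => Vst Γ q (Z q) j) p w
      = Vst Γ p (fderiv ℝ Z p w) j + Qform Γ p w (Z p).1 j := by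
  have hfun : (fun q => Vst Γ q (Z q) j)
      = fun q : P n => (Z q).2 j + ∑ k, (∑ m, Γ q.1 j k m * q.2 m) * (Z q).1 k := by
    funext q; simp [Vst, Amap]
  rw [hfun]
  rw [fdapp_add (((cd_Y2 hZ j).differentiable (by simp)).differentiableAt)
    ((ContDiff.sum fun k _ => ((cd_cmat hΓ j k).mul (cd_Y1 hZ k))).differentiable
      (by simp)).differentiableAt w]
  rw [fda_Y2 hZ j p w]
  rw [fdapp_sum (fun k _ =>
    (((cd_cmat hΓ j k).mul (cd_Y1 hZ k)).differentiable (by simp)).differentiableAt) w]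
  have hterm : ∀ k : Fin n, fderiv ℝ (fun q : P n => (∑ m, Γ q.1 j k m * q.2 m) * (Z q).1 k) p w
      = (∑ m, Γ p.1 j k m * p.2 m) * (fderiv ℝ Z p w).1 k
        + (∑ m, (fderiv ℝ (fun z => Γ z j k m) p.1 w.1 * p.2 m + Γ p.1 j k m * w.2 m))
            * (Z p).1 k := by
    intro k
    rw [fdapp_mul (((cd_cmat hΓ j k).differentiable (by simp)).differentiableAt)
      (((cd_Y1 hZ k).differentiable (by simp)).differentiableAt) w, fda_cmat hΓ j k p w,
      fda_Y1 hZ k p w]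
    ring
  rw [Finset.sum_congr rfl fun k _ => hterm k, Finset.sum_add_distrib]
  simp only [Vst, Amap, Qform]
  ring

/-- The key analytic fact: the derivative of `ω(Y, Z)` splits into a tensorial part
and the terms involving derivatives of the fields. -/
theorem fda_omega {g : Met n} {Γ : Chr n} (hg : ContDiff ℝ (⊤ : ℕ∞) g) (hΓ : ContDiff ℝ (⊤ : ℕ∞) Γ)
    {Y Z : P n → P n} (hY : ContDiff ℝ (⊤ : ℕ∞) Y) (hZ : ContDiff ℝ (⊤ : ℕ∞) Z) (p w : P n) :
    fderiv ℝ (fun q => ωform g Γ q (Y q) (Z q)) p w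
      = Eform g Γ p w (Y p) (Z p) + ωform g Γ p (fderiv ℝ Y p w) (Z p)
        + ωform g Γ p (Y p) (fderiv ℝ Z p w) := by
  have hωfun : (fun q => ωform g Γ q (Y q) (Z q)) = fun q : P n => ∑ i, ∑ j,
      g q.1 i j * ((Y q).1 i * Vst Γ q (Z q) j - Vst Γ q (Y q) j * (Z q).1 i) := rfl
  rw [hωfun]
  rw [fdapp_sum (fun i _ => ((ContDiff.sum fun j _ =>
    cd_bracket hg hΓ hY hZ i j).differentiable (by simp)).differentiableAt) w]
  have hrow : ∀ i : Fin n, fderiv ℝ (fun q : P n => ∑ j,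
      g q.1 i j * ((Y q).1 i * Vst Γ q (Z q) j - Vst Γ q (Y q) j * (Z q).1 i)) p w
      = ∑ j, (fderiv ℝ (fun x => g x i j) p.1 w.1 *
            ((Y p).1 i * Vst Γ p (Z p) j - Vst Γ p (Y p) j * (Z p).1 i)
          + g p.1 i j * ((fderiv ℝ Y p w).1 i * Vst Γ p (Z p) j
            + (Y p).1 i * (Vst Γ p (fderiv ℝ Z p w) j + Qform Γ p w (Z p).1 j)
            - ((Vst Γ p (fderiv ℝ Y p w) j + Qform Γ p w (Y p).1 j) * (Z p).1 i
              + Vst Γ p (Y p) j * (fderiv ℝ Z p w).1 i))) := by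
    intro i
    rw [fdapp_sum (fun j _ => ((cd_bracket hg hΓ hY hZ i j).differentiable
      (by simp)).differentiableAt) w]
    refine Finset.sum_congr rfl fun j _ => ?_
    have d1 : DifferentiableAt ℝ (fun q : P n => g q.1 i j) p :=
      ((cd_gP hg i j).differentiable (by simp)).differentiableAt
    have d2 : DifferentiableAt ℝ (fun q : P n => (Y q).1 i) p :=
      ((cd_Y1 hY i).differentiable (by simp)).differentiableAt
    have d3 : DifferentiableAt ℝ (fun q : P n => Vst Γ q (Z q) j) p :=
      ((cd_VstF hΓ hZ j).differentiable (by simp)).differentiableAt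
    have d4 : DifferentiableAt ℝ (fun q : P n => Vst Γ q (Y q) j) p :=
      ((cd_VstF hΓ hY j).differentiable (by simp)).differentiableAt
    have d5 : DifferentiableAt ℝ (fun q : P n => (Z q).1 i) p :=
      ((cd_Y1 hZ i).differentiable (by simp)).differentiableAt
    have d23 : DifferentiableAt ℝ (fun q : P n => (Y q).1 i * Vst Γ q (Z q) j) p := d2.mul d3
    have d45 : DifferentiableAt ℝ (fun q : P n => Vst Γ q (Y q) j * (Z q).1 i) p := d4.mul d5
    have d2345 : DifferentiableAt ℝ (fun q : P n =>
        (Y q).1 i * Vst Γ q (Z q) j - Vst Γ q (Y q) j * (Z q).1 i) p := d23.sub d45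
    rw [fdapp_mul d1 d2345 w,
      fdapp_sub d23 d45 w, fdapp_mul d2 d3 w, fdapp_mul d4 d5 w,
      fda_gP hg i j p w, fda_Y1 hY i p w, fda_Y1 hZ i p w,
      fda_Vst hΓ hZ j p w, fda_Vst hΓ hY j p w]
    ring
  rw [Finset.sum_congr rfl fun i _ => hrow i]
  simp only [Eform, ωform]
  rw [sum2_add4]
  exact Finset.sum_congr rfl fun i _ => Finset.sum_congr rfl fun j _ => by ring

end Aux


section Aux2

variable {n : ℕ}

theorem Vst_sub (Γ : Chr n) (p : P n) (a b : P n) (j : Fin n) :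
    Vst Γ p (a - b) j = Vst Γ p a j - Vst Γ p b j := by
  simp only [Vst, Amap, Prod.fst_sub, Prod.snd_sub, Pi.sub_apply]
  have : ∀ k : Fin n, (∑ m, Γ p.1 j k m * p.2 m) * (a.1 k - b.1 k)
      = (∑ m, Γ p.1 j k m * p.2 m) * a.1 k - (∑ m, Γ p.1 j k m * p.2 m) * b.1 k := by
    intro k; ring
  rw [Finset.sum_congr rfl fun k _ => this k, Finset.sum_sub_distrib]
  ring

theorem omega_antisym (g : Met n) (Γ : Chr n) (p u v : P n) :
    ωform g Γ p u v = -ωform g Γ p v u := by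
  simp only [ωform]
  rw [← Finset.sum_neg_distrib]
  refine Finset.sum_congr rfl fun i _ => ?_
  rw [← Finset.sum_neg_distrib]
  exact Finset.sum_congr rfl fun j _ => by ring

theorem omega_sub_left (g : Met n) (Γ : Chr n) (p : P n) (a b c : P n) :
    ωform g Γ p (a - b) c = ωform g Γ p a c - ωform g Γ p b c := by
  simp only [ωform]
  rw [← Finset.sum_sub_distrib]
  refine Finset.sum_congr rfl fun i _ => ?_
  rw [← Finset.sum_sub_distrib]
  refine Finset.sum_congr rfl fun j _ => ?_
  rw [Vst_sub]
  simp only [Prod.fst_sub, Pi.sub_apply]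
  ring

/-- `dω` on smooth fields is tensorial, with value `delF`. -/
theorem dform_eq {g : Met n} {Γ : Chr n} (hg : ContDiff ℝ (⊤ : ℕ∞) g) (hΓ : ContDiff ℝ (⊤ : ℕ∞) Γ)
    {X Y Z : P n → P n} (hX : ContDiff ℝ (⊤ : ℕ∞) X) (hY : ContDiff ℝ (⊤ : ℕ∞) Y) (hZ : ContDiff ℝ (⊤ : ℕ∞) Z)
    (p : P n) :
    dform (ωform g Γ) X Y Z p = delF g Γ p (X p) (Y p) (Z p) := by
  simp only [dform, lieP]
  rw [fda_omega hg hΓ hY hZ p (X p), fda_omega hg hΓ hZ hX p (Y p),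
    fda_omega hg hΓ hX hY p (Z p),
    omega_sub_left g Γ p (fderiv ℝ Y p (X p)) (fderiv ℝ X p (Y p)) (Z p),
    omega_sub_left g Γ p (fderiv ℝ Z p (Y p)) (fderiv ℝ Y p (Z p)) (X p),
    omega_sub_left g Γ p (fderiv ℝ X p (Z p)) (fderiv ℝ Z p (X p)) (Y p),
    omega_antisym g Γ p (Y p) (fderiv ℝ Z p (X p)),
    omega_antisym g Γ p (Z p) (fderiv ℝ X p (Y p)),
    omega_antisym g Γ p (X p) (fderiv ℝ Y p (Z p))]
  simp only [delF]
  ring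

end Aux2


section Aux3

variable {n : ℕ}

theorem sum2_add (A B : Fin n → Fin n → ℝ) :
    (∑ i, ∑ j, A i j) + (∑ i, ∑ j, B i j) = ∑ i, ∑ j, (A i j + B i j) := by
  simp [Finset.sum_add_distrib]

theorem sum2_split4pm (A B C D : Fin n → Fin n → ℝ) :
    (∑ i, ∑ j, (A i j + B i j - C i j - D i j))
      = (∑ i, ∑ j, A i j) + (∑ i, ∑ j, B i j) - (∑ i, ∑ j, C i j) - (∑ i, ∑ j, D i j) := by
  simp [Finset.sum_add_distrib, Finset.sum_sub_distrib]

theorem sum3_rot (f : Fin n → Fin n → Fin n → ℝ) :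
    ∑ a, ∑ b, ∑ c, f a b c = ∑ b, ∑ c, ∑ a, f a b c := by
  rw [Finset.sum_comm]
  exact Finset.sum_congr rfl fun _ _ => Finset.sum_comm

theorem sum3_rot' (f : Fin n → Fin n → Fin n → ℝ) :
    ∑ a, ∑ b, ∑ c, f a b c = ∑ c, ∑ a, ∑ b, f a b c := by
  rw [sum3_rot, sum3_rot]

theorem sum3_swap12 (f : Fin n → Fin n → Fin n → ℝ) :
    ∑ a, ∑ b, ∑ c, f a b c = ∑ a, ∑ b, ∑ c, f b a c := Finset.sum_comm

/-! #### The atomic contractions -/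

/-- Atom: `∂g(a¹) · b¹ ⊗ c²`. -/
def X1 (g : Met n) (p : P n) (a b c : P n) : ℝ :=
  ∑ i, ∑ j, fderiv ℝ (fun z => g z i j) p.1 a.1 * (b.1 i * c.2 j)

/-- Atom: `∂g(a¹) · b¹ ⊗ (A c¹)`. -/
def X2 (g : Met n) (Γ : Chr n) (p : P n) (a b c : P n) : ℝ :=
  ∑ i, ∑ j, fderiv ℝ (fun z => g z i j) p.1 a.1 * (b.1 i * Amap Γ p c.1 j)

/-- The `∂Γ`-part of `Qform`. -/
def QD (Γ : Chr n) (p : P n) (w1 : B n) (ξ : B n) (j : Fin n) : ℝ :=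
  ∑ k, (∑ m, fderiv ℝ (fun z => Γ z j k m) p.1 w1 * p.2 m) * ξ k

/-- Atom: `g · b¹ ⊗ QD(a¹, c¹)`. -/
def X3 (g : Met n) (Γ : Chr n) (p : P n) (a b c : P n) : ℝ :=
  ∑ i, ∑ j, g p.1 i j * (b.1 i * QD Γ p a.1 c.1 j)

/-- Atom: `g · b¹ ⊗ Γ(a², c¹)`. -/
def X4 (g : Met n) (Γ : Chr n) (p : P n) (a b c : P n) : ℝ :=
  ∑ i, ∑ j, g p.1 i j * (b.1 i * ∑ k, (∑ m, Γ p.1 j k m * a.2 m) * c.1 k)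

/-- Atom: `g · a¹ ⊗ Γ(A c¹, b¹)`. -/
def X5 (g : Met n) (Γ : Chr n) (p : P n) (a b c : P n) : ℝ :=
  ∑ i, ∑ j, g p.1 i j * (a.1 i * ∑ k, (∑ l, Γ p.1 j k l * Amap Γ p c.1 l) * b.1 k)

theorem Q_split (Γ : Chr n) (p w : P n) (ξ : B n) (j : Fin n) :
    Qform Γ p w ξ j = QD Γ p w.1 ξ j + ∑ k, (∑ m, Γ p.1 j k m * w.2 m) * ξ k := by
  simp only [Qform, QD]
  rw [← Finset.sum_add_distrib]
  refine Finset.sum_congr rfl fun k _ => ?_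
  rw [Finset.sum_add_distrib]
  ring

theorem E_to_atoms (g : Met n) (Γ : Chr n) (p w u v : P n) :
    Eform g Γ p w u v
      = X1 g p w u v + X2 g Γ p w u v - X1 g p w v u - X2 g Γ p w v u
        + (X3 g Γ p w u v + X4 g Γ p w u v - X3 g Γ p w v u - X4 g Γ p w v u) := by
  have hSa : (∑ i, ∑ j, fderiv ℝ (fun z => g z i j) p.1 w.1 *
      (u.1 i * Vst Γ p v j - Vst Γ p u j * v.1 i))
      = X1 g p w u v + X2 g Γ p w u v - X1 g p w v u - X2 g Γ p w v u := by
    simp only [X1, X2]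
    rw [← sum2_split4pm]
    refine Finset.sum_congr rfl fun i _ => Finset.sum_congr rfl fun j _ => ?_
    simp only [Vst]
    ring
  have hSb : (∑ i, ∑ j, g p.1 i j * (u.1 i * Qform Γ p w v.1 j - Qform Γ p w u.1 j * v.1 i))
      = X3 g Γ p w u v + X4 g Γ p w u v - X3 g Γ p w v u - X4 g Γ p w v u := by
    simp only [X3, X4, Q_split]
    rw [← sum2_split4pm]
    refine Finset.sum_congr rfl fun i _ => Finset.sum_congr rfl fun j _ => ?_
    ring
  simp only [Eform]
  rw [hSa, hSb]

end Aux3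


section Aux4

variable {n : ℕ}

/-- Contraction of a derivative against basis coefficients. -/
theorem contract_fderiv (f : B n → ℝ) (x ξ : B n) :
    ∑ l, ξ l * fderiv ℝ f x (Pi.single l 1) = fderiv ℝ f x ξ :=
  (fderiv_apply_basis f x ξ).symm

/-- Coefficient of `dω` of type `H*∧H*∧V*`. -/
def K1 (g : Met n) (Γ : Chr n) (x : B n) (a b c : Fin n) : ℝ :=
  fderiv ℝ (fun z => g z b c) x (Pi.single a 1)
    - fderiv ℝ (fun z => g z a c) x (Pi.single b 1)
    + ∑ j, (g x a j * Γ x j b c - g x b j * Γ x j a c)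

/-- One third of the coefficient of `dω` of type `H*∧H*∧H*`. -/
def K2a (g : Met n) (Γ : Chr n) (p : P n) (a b c : Fin n) : ℝ :=
  ∑ j, ∑ m, p.2 m * (g p.1 a j * Rcomp Γ p.1 j c b m)

theorem subA1 (g : Met n) (Γ : Chr n) (p : P n) (x y z : P n) :
    ∑ a, ∑ b, ∑ c, (x.1 a * y.1 b * Vst Γ p z c) *
        fderiv ℝ (fun t => g t b c) p.1 (Pi.single a 1)
      = X1 g p x y z + X2 g Γ p x y z := by
  rw [sum3_rot]
  have step : ∀ b c : Fin n, (∑ a, (x.1 a * y.1 b * Vst Γ p z c) *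
      fderiv ℝ (fun t => g t b c) p.1 (Pi.single a 1))
      = fderiv ℝ (fun t => g t b c) p.1 x.1 * (y.1 b * Vst Γ p z c) := by
    intro b c
    rw [fderiv_apply_basis (fun t => g t b c) p.1 x.1, Finset.sum_mul]
    exact Finset.sum_congr rfl fun a _ => by ring
  rw [Finset.sum_congr rfl fun b _ => Finset.sum_congr rfl fun c _ => step b c]
  simp only [X1, X2]
  rw [sum2_add]
  refine Finset.sum_congr rfl fun b _ => Finset.sum_congr rfl fun c _ => ?_
  simp only [Vst]
  ring

theorem subA3 (g : Met n) (Γ : Chr n) (p : P n) (x y z : P n) :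
    ∑ a, ∑ b, ∑ c, (x.1 a * y.1 b * Vst Γ p z c) * (∑ j, g p.1 a j * Γ p.1 j b c)
      = X4 g Γ p z x y + X5 g Γ p x y z := by
  have exp1 : ∀ a b c : Fin n, (x.1 a * y.1 b * Vst Γ p z c) * (∑ j, g p.1 a j * Γ p.1 j b c)
      = ∑ j, (x.1 a * y.1 b * Vst Γ p z c) * (g p.1 a j * Γ p.1 j b c) :=
    fun a b c => Finset.mul_sum _ _ _
  rw [Finset.sum_congr rfl fun a _ => Finset.sum_congr rfl fun b _ =>
    Finset.sum_congr rfl fun c _ => exp1 a b c]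
  -- reorder (b,c,j) → (j,b,c) inside each a
  rw [Finset.sum_congr rfl fun a _ => (sum3_rot' fun b c j =>
    (x.1 a * y.1 b * Vst Γ p z c) * (g p.1 a j * Γ p.1 j b c))]
  -- split Vst z = z.2 + Amap z.1
  have exp2 : ∀ a j b c : Fin n, (x.1 a * y.1 b * Vst Γ p z c) * (g p.1 a j * Γ p.1 j b c)
      = (x.1 a * y.1 b * z.2 c) * (g p.1 a j * Γ p.1 j b c)
        + (x.1 a * y.1 b * Amap Γ p z.1 c) * (g p.1 a j * Γ p.1 j b c) := by
    intro a j b c; simp only [Vst]; ring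
  rw [Finset.sum_congr rfl fun a _ => Finset.sum_congr rfl fun j _ =>
    Finset.sum_congr rfl fun b _ => Finset.sum_congr rfl fun c _ => exp2 a j b c]
  simp only [Finset.sum_add_distrib]
  congr 1
  · -- X4 part
    simp only [X4]
    refine Finset.sum_congr rfl fun a _ => Finset.sum_congr rfl fun j _ => ?_
    rw [Finset.mul_sum, Finset.mul_sum]
    refine Finset.sum_congr rfl fun b _ => ?_
    rw [Finset.sum_mul, Finset.mul_sum, Finset.mul_sum]
    refine Finset.sum_congr rfl fun c _ => ?_
    ring
  · -- X5 part
    simp only [X5]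
    refine Finset.sum_congr rfl fun a _ => Finset.sum_congr rfl fun j _ => ?_
    rw [Finset.mul_sum, Finset.mul_sum]
    refine Finset.sum_congr rfl fun b _ => ?_
    rw [Finset.sum_mul, Finset.mul_sum, Finset.mul_sum]
    refine Finset.sum_congr rfl fun c _ => ?_
    ring

theorem sum3_split4pm (A B C D : Fin n → Fin n → Fin n → ℝ) :
    (∑ a, ∑ b, ∑ c, (A a b c - B a b c + (C a b c - D a b c)))
      = (∑ a, ∑ b, ∑ c, A a b c) - (∑ a, ∑ b, ∑ c, B a b c)
        + ((∑ a, ∑ b, ∑ c, C a b c) - (∑ a, ∑ b, ∑ c, D a b c)) := by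
  simp [Finset.sum_add_distrib, Finset.sum_sub_distrib]

theorem LemA (g : Met n) (Γ : Chr n) (p : P n) (x y z : P n) :
    ∑ a, ∑ b, ∑ c, (x.1 a * y.1 b * Vst Γ p z c) * K1 g Γ p.1 a b c
      = X1 g p x y z + X2 g Γ p x y z - (X1 g p y x z + X2 g Γ p y x z)
        + (X4 g Γ p z x y + X5 g Γ p x y z - (X4 g Γ p z y x + X5 g Γ p y x z)) := by
  have expK : ∀ a b c : Fin n, (x.1 a * y.1 b * Vst Γ p z c) * K1 g Γ p.1 a b c
      = (x.1 a * y.1 b * Vst Γ p z c) * fderiv ℝ (fun t => g t b c) p.1 (Pi.single a 1)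
        - (x.1 a * y.1 b * Vst Γ p z c) * fderiv ℝ (fun t => g t a c) p.1 (Pi.single b 1)
        + ((x.1 a * y.1 b * Vst Γ p z c) * (∑ j, g p.1 a j * Γ p.1 j b c)
          - (x.1 a * y.1 b * Vst Γ p z c) * (∑ j, g p.1 b j * Γ p.1 j a c)) := by
    intro a b c
    simp only [K1, Finset.sum_sub_distrib]
    ring
  rw [Finset.sum_congr rfl fun a _ => Finset.sum_congr rfl fun b _ =>
    Finset.sum_congr rfl fun c _ => expK a b c, sum3_split4pm]
  have piece2 : ∑ a, ∑ b, ∑ c, (x.1 a * y.1 b * Vst Γ p z c) *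
      fderiv ℝ (fun t => g t a c) p.1 (Pi.single b 1)
      = X1 g p y x z + X2 g Γ p y x z := by
    rw [sum3_swap12 fun a b c => (x.1 a * y.1 b * Vst Γ p z c) *
      fderiv ℝ (fun t => g t a c) p.1 (Pi.single b 1)]
    rw [Finset.sum_congr rfl fun a _ => Finset.sum_congr rfl fun b _ =>
      Finset.sum_congr rfl fun c _ => (by ring :
        (x.1 b * y.1 a * Vst Γ p z c) * fderiv ℝ (fun t => g t b c) p.1 (Pi.single a 1)
        = (y.1 a * x.1 b * Vst Γ p z c) * fderiv ℝ (fun t => g t b c) p.1 (Pi.single a 1))]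
    exact subA1 g Γ p y x z
  have piece4 : ∑ a, ∑ b, ∑ c, (x.1 a * y.1 b * Vst Γ p z c) *
      (∑ j, g p.1 b j * Γ p.1 j a c)
      = X4 g Γ p z y x + X5 g Γ p y x z := by
    rw [sum3_swap12 fun a b c => (x.1 a * y.1 b * Vst Γ p z c) *
      (∑ j, g p.1 b j * Γ p.1 j a c)]
    rw [Finset.sum_congr rfl fun a _ => Finset.sum_congr rfl fun b _ =>
      Finset.sum_congr rfl fun c _ => (by ring :
        (x.1 b * y.1 a * Vst Γ p z c) * (∑ j, g p.1 a j * Γ p.1 j b c)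
        = (y.1 a * x.1 b * Vst Γ p z c) * (∑ j, g p.1 a j * Γ p.1 j b c))]
    exact subA3 g Γ p y x z
  rw [subA1 g Γ p x y z, subA3 g Γ p x y z, piece2, piece4]

end Aux4


section Aux5

variable {n : ℕ}

theorem LemB (g : Met n) (Γ : Chr n) (p : P n) (x y z : P n) :
    ∑ a, ∑ b, ∑ c, (x.1 a * y.1 b * z.1 c) * K2a g Γ p a b c
      = X3 g Γ p z x y - X3 g Γ p y x z + (X5 g Γ p x z y - X5 g Γ p x y z) := by
  have hX3zxy : X3 g Γ p z x y = ∑ a, ∑ j, ∑ b, ∑ m,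
      (x.1 a * y.1 b) * (p.2 m * g p.1 a j) * fderiv ℝ (fun t => Γ t j b m) p.1 z.1 := by
    simp only [X3, QD, Finset.mul_sum, Finset.sum_mul]
    refine Finset.sum_congr rfl fun a _ => Finset.sum_congr rfl fun j _ =>
      Finset.sum_congr rfl fun b _ => Finset.sum_congr rfl fun m _ => ?_
    ring
  have hX3yxz : X3 g Γ p y x z = ∑ a, ∑ j, ∑ c, ∑ m,
      (x.1 a * z.1 c) * (p.2 m * g p.1 a j) * fderiv ℝ (fun t => Γ t j c m) p.1 y.1 := by
    simp only [X3, QD, Finset.mul_sum, Finset.sum_mul]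
    refine Finset.sum_congr rfl fun a _ => Finset.sum_congr rfl fun j _ =>
      Finset.sum_congr rfl fun c _ => Finset.sum_congr rfl fun m _ => ?_
    ring
  have hX5xzy : X5 g Γ p x z y = ∑ a, ∑ j, ∑ c, ∑ s, ∑ b, ∑ m,
      (x.1 a * y.1 b * z.1 c) * (p.2 m * (g p.1 a j * (Γ p.1 j c s * Γ p.1 s b m))) := by
    simp only [X5, Amap, Finset.mul_sum, Finset.sum_mul]
    refine Finset.sum_congr rfl fun a _ => Finset.sum_congr rfl fun j _ =>
      Finset.sum_congr rfl fun k _ => Finset.sum_congr rfl fun l _ =>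
      Finset.sum_congr rfl fun b _ => Finset.sum_congr rfl fun m _ => ?_
    ring
  have hX5xyz : X5 g Γ p x y z = ∑ a, ∑ j, ∑ b, ∑ s, ∑ c, ∑ m,
      (x.1 a * y.1 b * z.1 c) * (p.2 m * (g p.1 a j * (Γ p.1 j b s * Γ p.1 s c m))) := by
    simp only [X5, Amap, Finset.mul_sum, Finset.sum_mul]
    refine Finset.sum_congr rfl fun a _ => Finset.sum_congr rfl fun j _ =>
      Finset.sum_congr rfl fun k _ => Finset.sum_congr rfl fun l _ =>
      Finset.sum_congr rfl fun b _ => Finset.sum_congr rfl fun m _ => ?_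
    ring
  have e1 : ∀ a b c : Fin n, (x.1 a * y.1 b * z.1 c) * K2a g Γ p a b c
      = ∑ j, ∑ m,
        ((x.1 a * y.1 b * z.1 c) * (p.2 m * (g p.1 a j *
            fderiv ℝ (fun t => Γ t j b m) p.1 (Pi.single c 1)))
          - (x.1 a * y.1 b * z.1 c) * (p.2 m * (g p.1 a j *
            fderiv ℝ (fun t => Γ t j c m) p.1 (Pi.single b 1)))
          + ((∑ s, (x.1 a * y.1 b * z.1 c) * (p.2 m * (g p.1 a j *
              (Γ p.1 j c s * Γ p.1 s b m))))
            - ∑ s, (x.1 a * y.1 b * z.1 c) * (p.2 m * (g p.1 a j *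
              (Γ p.1 j b s * Γ p.1 s c m))))) := by
    intro a b c
    simp only [K2a, Finset.mul_sum]
    refine Finset.sum_congr rfl fun j _ => Finset.sum_congr rfl fun m _ => ?_
    simp only [Rcomp, Finset.sum_sub_distrib, mul_sub, mul_add, Finset.mul_sum]
  have hc1 : ∀ a j b m : Fin n, (∑ c, (x.1 a * y.1 b * z.1 c) * (p.2 m * (g p.1 a j *
      fderiv ℝ (fun t => Γ t j b m) p.1 (Pi.single c 1))))
      = (x.1 a * y.1 b) * (p.2 m * g p.1 a j) * fderiv ℝ (fun t => Γ t j b m) p.1 z.1 := by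
    intro a j b m
    rw [← contract_fderiv (fun t => Γ t j b m) p.1 z.1, Finset.mul_sum]
    exact Finset.sum_congr rfl fun c _ => by ring
  have hc2 : ∀ a j c m : Fin n, (∑ b, (x.1 a * y.1 b * z.1 c) * (p.2 m * (g p.1 a j *
      fderiv ℝ (fun t => Γ t j c m) p.1 (Pi.single b 1))))
      = (x.1 a * z.1 c) * (p.2 m * g p.1 a j) * fderiv ℝ (fun t => Γ t j c m) p.1 y.1 := by
    intro a j c m
    rw [← contract_fderiv (fun t => Γ t j c m) p.1 y.1, Finset.mul_sum]
    exact Finset.sum_congr rfl fun b _ => by ring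
  conv_lhs => enter [2, a, 2, b, 2, c]; rw [e1 a b c]
  simp only [Finset.sum_sub_distrib, Finset.sum_add_distrib]
  rw [hX3zxy, hX3yxz, hX5xzy, hX5xyz]
  conv_lhs =>
    enter [1, 1]
    enter [2, a, 2, b]; rw [sum3_rot]
  conv_lhs =>
    enter [1, 1, 2, a]; rw [Finset.sum_comm]
  conv_lhs =>
    enter [1, 1, 2, a, 2, j, 2, b, 2, m]; rw [hc1 a j b m]
  conv_lhs =>
    enter [1, 2, 2, a]; rw [sum3_rot]
  conv_lhs =>
    enter [1, 2, 2, a]; rw [Finset.sum_comm]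
  conv_lhs =>
    enter [1, 2, 2, a, 2, j, 2, c]; rw [Finset.sum_comm]
  conv_lhs =>
    enter [1, 2, 2, a, 2, j, 2, c, 2, m]; rw [hc2 a j c m]
  conv_lhs =>
    enter [2, 1, 2, a]; rw [sum3_rot]
  conv_lhs =>
    enter [2, 1, 2, a]; rw [Finset.sum_comm]
  conv_lhs =>
    enter [2, 1, 2, a, 2, j, 2, c]; rw [sum3_rot']
  conv_lhs =>
    enter [2, 2, 2, a]; rw [sum3_rot']
  conv_lhs =>
    enter [2, 2, 2, a, 2, j, 2, b]; rw [sum3_rot']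

/-- The main algebraic identity: `dω` decomposes along the `K1`, `K2` coefficients. -/
theorem MAIN (g : Met n) (Γ : Chr n) (p u v w : P n) :
    delF g Γ p u v w
      = (∑ a, ∑ b, ∑ c, (u.1 a * v.1 b * Vst Γ p w c) * K1 g Γ p.1 a b c)
        + (∑ a, ∑ b, ∑ c, (v.1 a * w.1 b * Vst Γ p u c) * K1 g Γ p.1 a b c)
        + (∑ a, ∑ b, ∑ c, (w.1 a * u.1 b * Vst Γ p v c) * K1 g Γ p.1 a b c)
        + ((∑ a, ∑ b, ∑ c, (u.1 a * v.1 b * w.1 c) * K2a g Γ p a b c)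
          + (∑ a, ∑ b, ∑ c, (v.1 a * w.1 b * u.1 c) * K2a g Γ p a b c)
          + (∑ a, ∑ b, ∑ c, (w.1 a * u.1 b * v.1 c) * K2a g Γ p a b c)) := by
  rw [LemA g Γ p u v w, LemA g Γ p v w u, LemA g Γ p w u v,
      LemB g Γ p u v w, LemB g Γ p v w u, LemB g Γ p w u v]
  simp only [delF, E_to_atoms]
  ring

end Aux5


section Aux6

variable {n : ℕ}

/-- Reduction of `K1` to the torsion of the dual connection, using the duality
equation and symmetry of `g`. -/
theorem K1_eq (g : Met n) (Γ Γs : Chr n) (hgsymm : ∀ x i j, g x i j = g x j i)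
    (hdual : ∀ x i j k, fderiv ℝ (fun z => g z j k) x (Pi.single i 1) =
      ∑ l, (Γ x l i j * g x l k + g x j l * Γs x l i k)) (x : B n) (a b c : Fin n) :
    K1 g Γ x a b c = ∑ l, g x c l * (Γs x l a b - Γs x l b a) := by
  have rel : ∀ a b c : Fin n, ∑ l, (Γ x l a b * g x l c + g x b l * Γs x l a c)
      = ∑ l, (Γ x l a c * g x l b + g x c l * Γs x l a b) := by
    intro a b c
    rw [← hdual x a b c, ← hdual x a c b]
    have hfg : (fun z => g z b c) = (fun z => g z c b) := funext fun z => hgsymm z b c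
    rw [hfg]
  simp only [K1]
  rw [hdual x a b c, hdual x b a c, rel a b c, rel b a c,
    ← Finset.sum_sub_distrib, ← Finset.sum_add_distrib]
  refine Finset.sum_congr rfl fun l _ => ?_
  rw [hgsymm x l b, hgsymm x l a]
  ring

/-- First Bianchi identity for a torsion-free connection. -/
theorem Bianchi (Γs : Chr n) (hsym : ∀ x k i j, Γs x k i j = Γs x k j i) (x : B n)
    (l a i k : Fin n) :
    Rcomp Γs x l a i k + Rcomp Γs x l i k a + Rcomp Γs x l k a i = 0 := by
  have hfd : ∀ i j d : Fin n, fderiv ℝ (fun z => Γs z l i j) x (Pi.single d 1)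
      = fderiv ℝ (fun z => Γs z l j i) x (Pi.single d 1) := by
    intro i j d
    have hfg : (fun z => Γs z l i j) = (fun z => Γs z l j i) := funext fun z => hsym z l i j
    rw [hfg]
  have hq : (∑ m, (Γs x l a m * Γs x m i k - Γs x l i m * Γs x m a k))
      + ((∑ m, (Γs x l i m * Γs x m k a - Γs x l k m * Γs x m i a))
        + ∑ m, (Γs x l k m * Γs x m a i - Γs x l a m * Γs x m k i)) = 0 := by
    rw [← Finset.sum_add_distrib, ← Finset.sum_add_distrib]
    refine Finset.sum_eq_zero fun m _ => ?_
    rw [hsym x m k a, hsym x m i a, hsym x m k i]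
    ring
  simp only [Rcomp]
  rw [hfd k a i, hfd a i k, hfd k i a]
  linear_combination hq

/-- Second-derivative symmetry for smooth functions. -/
theorem fderiv_swap (f : B n → ℝ) (hf : ContDiff ℝ (⊤ : ℕ∞) f) (x v w : B n) :
    fderiv ℝ (fun z => fderiv ℝ f z v) x w = fderiv ℝ (fun z => fderiv ℝ f z w) x v := by
  have hd : ContDiff ℝ (⊤ : ℕ∞) (fderiv ℝ f) := hf.fderiv_right (by exact (by simp))
  have h1 : ∀ v w : B n, fderiv ℝ (fun z => fderiv ℝ f z v) x w
      = fderiv ℝ (fderiv ℝ f) x w v := by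
    intro v w
    rw [fderiv_clm_apply (hd.differentiable (by simp)).differentiableAt (differentiableAt_const _)]
    simp
  rw [h1, h1]
  exact (hf.contDiffAt.isSymmSndFDerivAt (by rw [minSmoothness_of_isRCLikeNormedField]; exact WithTop.coe_le_coe.mpr le_top)).eq w v

/-- Duality of the curvature tensors of `∇` and `∇*`. -/
theorem dual_curv (g : Met n) (Γ Γs : Chr n) (hg : ContDiff ℝ (⊤ : ℕ∞) g) (hΓ : ContDiff ℝ (⊤ : ℕ∞) Γ)
    (hΓs : ContDiff ℝ (⊤ : ℕ∞) Γs)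
    (hdual : ∀ x i j k, fderiv ℝ (fun z => g z j k) x (Pi.single i 1) =
      ∑ l, (Γ x l i j * g x l k + g x j l * Γs x l i k)) (x : B n) (a i j k : Fin n) :
    ∑ l, (g x l k * Rcomp Γ x l a i j + g x j l * Rcomp Γs x l a i k) = 0 := by
  -- flattened atoms
  set L1 : Fin n → Fin n → ℝ := fun i a =>
    ∑ l, fderiv ℝ (fun z => Γ z l i j) x (Pi.single a 1) * g x l k with hL1
  set L5 : Fin n → Fin n → ℝ := fun i a =>
    ∑ l, g x j l * fderiv ℝ (fun z => Γs z l i k) x (Pi.single a 1) with hL5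
  set Q1 : Fin n → Fin n → ℝ := fun i a =>
    ∑ l, ∑ s, Γ x l i j * (Γ x s a l * g x s k) with hQ1
  set Q2 : Fin n → Fin n → ℝ := fun i a =>
    ∑ l, ∑ s, Γ x l i j * (g x l s * Γs x s a k) with hQ2
  set Q3 : Fin n → Fin n → ℝ := fun i a =>
    ∑ l, ∑ s, Γ x s a j * g x s l * Γs x l i k with hQ3
  set Q4 : Fin n → Fin n → ℝ := fun i a =>
    ∑ l, ∑ s, g x j s * Γs x s a l * Γs x l i k with hQ4
  -- the flattened derivative of the duality equation
  have flat : ∀ i a : Fin n,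
      fderiv ℝ (fun z => ∑ l, (Γ z l i j * g z l k + g z j l * Γs z l i k)) x (Pi.single a 1)
      = L1 i a + Q1 i a + Q2 i a + Q3 i a + Q4 i a + L5 i a := by
    intro i a
    have hdiff : ∀ l : Fin n, DifferentiableAt ℝ
        (fun z => Γ z l i j * g z l k + g z j l * Γs z l i k) x :=
      fun l => ((((cd_Γ4 hΓ l i j).mul (cd_g3 hg l k)).add
        ((cd_g3 hg j l).mul (cd_Γ4 hΓs l i k))).differentiable (by simp)).differentiableAt
    rw [fdapp_sum (fun l _ => hdiff l) (Pi.single a 1)]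
    have hterm : ∀ l : Fin n,
        fderiv ℝ (fun z => Γ z l i j * g z l k + g z j l * Γs z l i k) x (Pi.single a 1)
        = fderiv ℝ (fun z => Γ z l i j) x (Pi.single a 1) * g x l k
          + Γ x l i j * fderiv ℝ (fun z => g z l k) x (Pi.single a 1)
          + (fderiv ℝ (fun z => g z j l) x (Pi.single a 1) * Γs x l i k
            + g x j l * fderiv ℝ (fun z => Γs z l i k) x (Pi.single a 1)) := by
      intro l
      rw [fdapp_add
        (((cd_Γ4 hΓ l i j).mul (cd_g3 hg l k)).differentiable (by simp)).differentiableAt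
        (((cd_g3 hg j l).mul (cd_Γ4 hΓs l i k)).differentiable (by simp)).differentiableAt,
        fdapp_mul ((cd_Γ4 hΓ l i j).differentiable (by simp)).differentiableAt
          ((cd_g3 hg l k).differentiable (by simp)).differentiableAt,
        fdapp_mul ((cd_g3 hg j l).differentiable (by simp)).differentiableAt
          ((cd_Γ4 hΓs l i k).differentiable (by simp)).differentiableAt]
      ring
    rw [Finset.sum_congr rfl fun l _ => hterm l]
    conv_lhs => enter [2, l]; rw [hdual x a l k, hdual x a j l]
    have hterm2 : ∀ l : Fin n,
        fderiv ℝ (fun z => Γ z l i j) x (Pi.single a 1) * g x l k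
          + Γ x l i j * (∑ s, (Γ x s a l * g x s k + g x l s * Γs x s a k))
          + ((∑ s, (Γ x s a j * g x s l + g x j s * Γs x s a l)) * Γs x l i k
            + g x j l * fderiv ℝ (fun z => Γs z l i k) x (Pi.single a 1))
        = fderiv ℝ (fun z => Γ z l i j) x (Pi.single a 1) * g x l k
          + ((∑ s, Γ x l i j * (Γ x s a l * g x s k))
            + ∑ s, Γ x l i j * (g x l s * Γs x s a k))
          + (((∑ s, Γ x s a j * g x s l * Γs x l i k)
            + ∑ s, g x j s * Γs x s a l * Γs x l i k)
            + g x j l * fderiv ℝ (fun z => Γs z l i k) x (Pi.single a 1)) := by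
      intro l
      rw [Finset.mul_sum, Finset.sum_mul,
        Finset.sum_congr rfl fun s _ => mul_add (Γ x l i j) (Γ x s a l * g x s k)
          (g x l s * Γs x s a k),
        Finset.sum_congr rfl fun s _ => add_mul (Γ x s a j * g x s l)
          (g x j s * Γs x s a l) (Γs x l i k),
        Finset.sum_add_distrib, Finset.sum_add_distrib]
    rw [Finset.sum_congr rfl fun l _ => hterm2 l]
    simp only [Finset.sum_add_distrib, hL1, hL5, hQ1, hQ2, hQ3, hQ4]
    ring
  have master : ∀ i a : Fin n, L1 i a + Q1 i a + Q2 i a + Q3 i a + Q4 i a + L5 i a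
      = L1 a i + Q1 a i + Q2 a i + Q3 a i + Q4 a i + L5 a i := by
    intro i a
    rw [← flat i a, ← flat a i]
    have h1 : (fun z => fderiv ℝ (fun z' => g z' j k) z (Pi.single i 1))
        = (fun z => ∑ l, (Γ z l i j * g z l k + g z j l * Γs z l i k)) :=
      funext fun z => hdual z i j k
    have h2 : (fun z => fderiv ℝ (fun z' => g z' j k) z (Pi.single a 1))
        = (fun z => ∑ l, (Γ z l a j * g z l k + g z j l * Γs z l a k)) :=
      funext fun z => hdual z a j k
    rw [← h1, ← h2]
    exact fderiv_swap (fun z => g z j k) (cd_g3 hg j k) x (Pi.single i 1) (Pi.single a 1)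
  have c1 : ∀ i a : Fin n, Q2 i a = Q3 a i := by
    intro i a
    simp only [hQ2, hQ3]
    rw [Finset.sum_comm]
    exact Finset.sum_congr rfl fun s _ => Finset.sum_congr rfl fun l _ => by ring
  set ii := i with hii
  set aa := a with haa
  have expand : ∀ l : Fin n, g x l k * Rcomp Γ x l aa ii j + g x j l * Rcomp Γs x l aa ii k
      = (g x l k * fderiv ℝ (fun z => Γ z l ii j) x (Pi.single aa 1)
          - g x l k * fderiv ℝ (fun z => Γ z l aa j) x (Pi.single ii 1)
        + ((∑ s, g x l k * (Γ x l aa s * Γ x s ii j))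
          - ∑ s, g x l k * (Γ x l ii s * Γ x s aa j)))
        + (g x j l * fderiv ℝ (fun z => Γs z l ii k) x (Pi.single aa 1)
          - g x j l * fderiv ℝ (fun z => Γs z l aa k) x (Pi.single ii 1)
          + ((∑ s, g x j l * (Γs x l aa s * Γs x s ii k))
            - ∑ s, g x j l * (Γs x l ii s * Γs x s aa k))) := by
    intro l
    simp only [Rcomp, Finset.sum_sub_distrib, mul_sub, mul_add, Finset.mul_sum]
  rw [Finset.sum_congr rfl fun l _ => expand l]
  simp only [Finset.sum_add_distrib, Finset.sum_sub_distrib]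
  have sw1 : ∀ i a : Fin n, (∑ l, ∑ s, g x l k * (Γ x l a s * Γ x s i j)) = Q1 i a := by
    intro i a
    simp only [hQ1]
    rw [Finset.sum_comm]
    exact Finset.sum_congr rfl fun s _ => Finset.sum_congr rfl fun l _ => by ring
  have sw3 : ∀ i a : Fin n, (∑ l, ∑ s, g x j l * (Γs x l a s * Γs x s i k)) = Q4 i a := by
    intro i a
    simp only [hQ4]
    rw [Finset.sum_comm]
    exact Finset.sum_congr rfl fun s _ => Finset.sum_congr rfl fun l _ => by ring
  have l1 : ∀ i a : Fin n, (∑ l, g x l k * fderiv ℝ (fun z => Γ z l i j) x (Pi.single a 1))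
      = L1 i a := by
    intro i a
    simp only [hL1]
    exact Finset.sum_congr rfl fun l _ => by ring
  rw [sw1 ii aa, sw1 aa ii, sw3 ii aa, sw3 aa ii, l1 ii aa, l1 aa ii]
  have l5 : ∀ i a : Fin n, (∑ l, g x j l * fderiv ℝ (fun z => Γs z l i k) x (Pi.single a 1))
      = L5 i a := fun i a => by simp only [hL5]
  rw [l5 ii aa, l5 aa ii]
  linear_combination master ii aa - c1 ii aa + c1 aa ii

end Aux6


section Aux7

variable {n : ℕ}

theorem tripleg (g : Met n) (Γ Γs : Chr n) (hg : ContDiff ℝ (⊤ : ℕ∞) g) (hΓ : ContDiff ℝ (⊤ : ℕ∞) Γ)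
    (hΓs : ContDiff ℝ (⊤ : ℕ∞) Γs) (hgsymm : ∀ x i j, g x i j = g x j i)
    (hdual : ∀ x i j k, fderiv ℝ (fun z => g z j k) x (Pi.single i 1) =
      ∑ l, (Γ x l i j * g x l k + g x j l * Γs x l i k))
    (hsym : ∀ x k i j, Γs x k i j = Γs x k j i)
    (x : B n) (m a b c : Fin n) :
    (∑ j, g x a j * Rcomp Γ x j c b m) + (∑ j, g x b j * Rcomp Γ x j a c m)
      + (∑ j, g x c j * Rcomp Γ x j b a m) = 0 := by
  have d1 := dual_curv g Γ Γs hg hΓ hΓs hdual x c b m a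
  have d2 := dual_curv g Γ Γs hg hΓ hΓs hdual x a c m b
  have d3 := dual_curv g Γ Γs hg hΓ hΓs hdual x b a m c
  rw [Finset.sum_add_distrib] at d1 d2 d3
  have e1 : (∑ j, g x a j * Rcomp Γ x j c b m) = ∑ l, g x l a * Rcomp Γ x l c b m :=
    Finset.sum_congr rfl fun j _ => by rw [hgsymm x a j]
  have e2 : (∑ j, g x b j * Rcomp Γ x j a c m) = ∑ l, g x l b * Rcomp Γ x l a c m :=
    Finset.sum_congr rfl fun j _ => by rw [hgsymm x b j]
  have e3 : (∑ j, g x c j * Rcomp Γ x j b a m) = ∑ l, g x l c * Rcomp Γ x l b a m :=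
    Finset.sum_congr rfl fun j _ => by rw [hgsymm x c j]
  rw [e1, e2, e3]
  have hb : (∑ l, g x m l * Rcomp Γs x l c b a) + (∑ l, g x m l * Rcomp Γs x l a c b)
      + (∑ l, g x m l * Rcomp Γs x l b a c) = 0 := by
    rw [← Finset.sum_add_distrib, ← Finset.sum_add_distrib]
    refine Finset.sum_eq_zero fun l _ => ?_
    linear_combination (g x m l) * Bianchi Γs hsym x l c b a
  linarith [d1, d2, d3, hb]

theorem K2cyc (g : Met n) (Γ Γs : Chr n) (hg : ContDiff ℝ (⊤ : ℕ∞) g) (hΓ : ContDiff ℝ (⊤ : ℕ∞) Γ)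
    (hΓs : ContDiff ℝ (⊤ : ℕ∞) Γs) (hgsymm : ∀ x i j, g x i j = g x j i)
    (hdual : ∀ x i j k, fderiv ℝ (fun z => g z j k) x (Pi.single i 1) =
      ∑ l, (Γ x l i j * g x l k + g x j l * Γs x l i k))
    (hsym : ∀ x k i j, Γs x k i j = Γs x k j i)
    (p : P n) (a b c : Fin n) :
    K2a g Γ p a b c + K2a g Γ p b c a + K2a g Γ p c a b = 0 := by
  have hsw : ∀ a b c : Fin n, K2a g Γ p a b c
      = ∑ m, p.2 m * ∑ j, g p.1 a j * Rcomp Γ p.1 j c b m := by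
    intro a b c
    simp only [K2a]
    rw [Finset.sum_comm]
    exact Finset.sum_congr rfl fun m _ => (Finset.mul_sum _ _ _).symm
  rw [hsw a b c, hsw b c a, hsw c a b, ← Finset.sum_add_distrib, ← Finset.sum_add_distrib]
  refine Finset.sum_eq_zero fun m _ => ?_
  linear_combination (p.2 m) *
    tripleg g Γ Γs hg hΓ hΓs hgsymm hdual hsym p.1 m a b c

theorem pos_nondeg (g : Met n)
    (hgpos : ∀ x (ξ : B n), ξ ≠ 0 → 0 < ∑ i, ∑ j, g x i j * ξ i * ξ j)
    (x : B n) (t : B n) (h : ∀ c : Fin n, ∑ l, g x c l * t l = 0) (l : Fin n) : t l = 0 := by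
  by_contra hne
  have ht : t ≠ 0 := fun h0 => hne (by rw [h0]; rfl)
  have hq := hgpos x t ht
  have hz : (∑ i, ∑ j, g x i j * t i * t j) = 0 := by
    refine Finset.sum_eq_zero fun i _ => ?_
    have hrow : (∑ j, g x i j * t i * t j) = t i * ∑ j, g x i j * t j := by
      rw [Finset.mul_sum]
      exact Finset.sum_congr rfl fun j _ => by ring
    rw [hrow, h i, mul_zero]
  rw [hz] at hq
  exact lt_irrefl 0 hq

end Aux7

/-- `dω = 0` on the tangent bundle iff the dual connection `∇*` of `(∇, g)` is
torsion-free. Here `Γs` are the Christoffel symbols of `∇*`, determined by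
`∂ᵢ gⱼₖ = Γˡᵢⱼ gₗₖ + gⱼₗ Γ*ˡᵢₖ`. -/
theorem domega_zero_iff_dual_torsion_free {n : ℕ}
    (g : Met n) (hgsmooth : ContDiff ℝ (⊤ : ℕ∞) g)
    (hgsymm : ∀ x i j, g x i j = g x j i)
    (hgpos : ∀ x (ξ : B n), ξ ≠ 0 → 0 < ∑ i, ∑ j, g x i j * ξ i * ξ j)
    (Γ Γs : Chr n) (hΓ : ContDiff ℝ (⊤ : ℕ∞) Γ) (hΓs : ContDiff ℝ (⊤ : ℕ∞) Γs)
    (hdual : ∀ x i j k, fderiv ℝ (fun z => g z j k) x (Pi.single i 1) =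
      ∑ l, (Γ x l i j * g x l k + g x j l * Γs x l i k)) :
    (∀ X Y Z : P n → P n, ContDiff ℝ (⊤ : ℕ∞) X → ContDiff ℝ (⊤ : ℕ∞) Y → ContDiff ℝ (⊤ : ℕ∞) Z →
        ∀ p, dform (ωform g Γ) X Y Z p = 0) ↔
      (∀ x k i j, Γs x k i j = Γs x k j i) := by
  constructor
  · intro H x k i j
    have hdel : ∀ (p u v w : P n), delF g Γ p u v w = 0 := by
      intro p u v w
      have h := H (fun _ => u) (fun _ => v) (fun _ => w) contDiff_const contDiff_const
        contDiff_const p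
      rwa [dform_eq hgsmooth hΓ contDiff_const contDiff_const contDiff_const p] at h
    have hK1 : ∀ (y : B n) (a b c : Fin n), K1 g Γ y a b c = 0 := by
      intro y a b c
      have h0 := hdel (y, 0) (Pi.single a 1, 0) (Pi.single b 1, 0) (0, Pi.single c 1)
      rw [MAIN] at h0
      simp only [Vst, Amap, K2a, Pi.zero_apply, mul_zero, zero_mul,
        Finset.sum_const_zero, add_zero, zero_add] at h0
      simpa [Pi.single_apply] using h0
    have hrel : ∀ c : Fin n, ∑ l, g x c l * (Γs x l i j - Γs x l j i) = 0 := by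
      intro c
      rw [← K1_eq g Γ Γs hgsymm hdual x i j c]
      exact hK1 x i j c
    have h := pos_nondeg g hgpos x (fun l => Γs x l i j - Γs x l j i) hrel k
    simp only [sub_eq_zero] at h
    exact h
  · intro hsym X Y Z hX hY hZ p
    rw [dform_eq hgsmooth hΓ hX hY hZ p, MAIN]
    have hK1 : ∀ a b c : Fin n, K1 g Γ p.1 a b c = 0 := by
      intro a b c
      rw [K1_eq g Γ Γs hgsymm hdual p.1 a b c]
      exact Finset.sum_eq_zero fun l _ => by rw [hsym p.1 l a b]; ring
    have hS : ∀ (f : Fin n → Fin n → Fin n → ℝ),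
        (∑ a, ∑ b, ∑ c, f a b c * K1 g Γ p.1 a b c) = 0 := fun f =>
      Finset.sum_eq_zero fun a _ => Finset.sum_eq_zero fun b _ =>
        Finset.sum_eq_zero fun c _ => by rw [hK1 a b c, mul_zero]
    rw [hS, hS, hS, zero_add, zero_add, zero_add]
    have rotB : (∑ a, ∑ b, ∑ c, ((Y p).1 a * (Z p).1 b * (X p).1 c) * K2a g Γ p a b c)
        = ∑ a, ∑ b, ∑ c, ((X p).1 a * (Y p).1 b * (Z p).1 c) * K2a g Γ p b c a := by
      conv_rhs => rw [sum3_rot]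
      exact Finset.sum_congr rfl fun a _ => Finset.sum_congr rfl fun b _ =>
        Finset.sum_congr rfl fun c _ => by ring
    have rotC : (∑ a, ∑ b, ∑ c, ((Z p).1 a * (X p).1 b * (Y p).1 c) * K2a g Γ p a b c)
        = ∑ a, ∑ b, ∑ c, ((X p).1 a * (Y p).1 b * (Z p).1 c) * K2a g Γ p c a b := by
      conv_rhs => rw [sum3_rot']
      exact Finset.sum_congr rfl fun a _ => Finset.sum_congr rfl fun b _ =>
        Finset.sum_congr rfl fun c _ => by ring
    rw [rotB, rotC]
    simp only [← Finset.sum_add_distrib]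
    refine Finset.sum_eq_zero fun a _ => Finset.sum_eq_zero fun b _ =>
      Finset.sum_eq_zero fun c _ => ?_
    linear_combination ((X p).1 a * (Y p).1 b * (Z p).1 c) *
      K2cyc g Γ Γs hgsmooth hΓ hΓs hgsymm hdual hsym p a b c
end
end
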